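/- arXiv:2203.15123 — 8 statements merged into one kernel-verified Lean document; each statement's English description precedes it below -/
import Mathlib

section
/- Let 𝓕 be an analytic filter on ℕ and let X be a Banach space over ℝ or ℂ with an 𝓕-basis (e_n)_{n=1}^∞. Then every coordinate functional e_n* : X → 𝕂 is continuous. -/
open Filter Topology MeasureTheory TopologicalSpace

/-- A filter on ℕ (as a family of subsets): closed under finite intersections,
upwards-closed, and containing every cofinite set. -/
def IsFilterOnNat (F : Set (Set ℕ)) : Prop :=
  (∀ A ∈ F, ∀ B ∈ F, A ∩ B ∈ F) ∧
  (∀ A ∈ F, ∀ B : Set ℕ, A ⊆ B → B ∈ F) ∧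
  (∀ A : Set ℕ, Aᶜ.Finite → A ∈ F)

/-- `F`-convergence of a sequence `u` to `x` in a normed space. -/
def FLim {X : Type*} [SeminormedAddCommGroup X] (F : Set (Set ℕ)) (u : ℕ → X) (x : X) : Prop :=
  ∀ ε : ℝ, 0 < ε → ∃ A ∈ F, ∀ n ∈ A, ‖x - u n‖ < ε

/-- `(e n)` is an `F`-basis with coordinate functionals `coord`: for every `x` the partial sums
of `∑ coord x i • e i` `F`-converge to `x`, and the coefficient sequence is unique. -/
def IsFBasis {𝕂 X : Type*} [RCLike 𝕂] [NormedAddCommGroup X] [NormedSpace 𝕂 X]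
    (F : Set (Set ℕ)) (e : ℕ → X) (coord : X → ℕ → 𝕂) : Prop :=
  ∀ x : X, FLim F (fun m => ∑ i ∈ Finset.range m, coord x i • e i) x ∧
    ∀ b : ℕ → 𝕂, FLim F (fun m => ∑ i ∈ Finset.range m, b i • e i) x → b = coord x

/-- A family of subsets of ℕ viewed as a subset of the Cantor space `ℕ → Bool`. -/
def toCantor (F : Set (Set ℕ)) : Set (ℕ → Bool) := {f | {n | f n = true} ∈ F}

/-- A family of subsets of ℕ is analytic if its copy in the Cantor space is an analytic set. -/
def IsAnalyticFamily (F : Set (Set ℕ)) : Prop := MeasureTheory.AnalyticSet (toCantor F)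

/-- `A ⊆ ℕ` has asymptotic density one. -/
def HasDensityOne (A : Set ℕ) : Prop :=
  Filter.Tendsto
    (fun n : ℕ => (∑ i ∈ Finset.range n, Set.indicator A (fun _ => (1 : ℝ)) i) / n)
    Filter.atTop (nhds 1)

/-- The filter of statistical convergence: all subsets of ℕ of asymptotic density one. -/
def statFilter : Set (Set ℕ) := {A : Set ℕ | HasDensityOne A}

section AuxLemmas

open Set

theorem flim_add' {X : Type*} [SeminormedAddCommGroup X] {F : Set (Set ℕ)}
    (hInter : ∀ A ∈ F, ∀ B ∈ F, A ∩ B ∈ F)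
    {u v : ℕ → X} {x y : X} (hu : FLim F u x) (hv : FLim F v y) :
    FLim F (fun m => u m + v m) (x + y) := by
  intro ε hε
  obtain ⟨A, hA, hAe⟩ := hu (ε / 2) (by positivity)
  obtain ⟨B, hB, hBe⟩ := hv (ε / 2) (by positivity)
  refine ⟨A ∩ B, hInter A hA B hB, fun m hm => ?_⟩
  have hxy : x + y - (u m + v m) = (x - u m) + (y - v m) := by abel
  rw [hxy]
  calc ‖(x - u m) + (y - v m)‖ ≤ ‖x - u m‖ + ‖y - v m‖ := norm_add_le _ _
    _ < ε / 2 + ε / 2 := add_lt_add (hAe m hm.1) (hBe m hm.2)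
    _ = ε := by ring

theorem flim_smul' {𝕂 X : Type*} [RCLike 𝕂] [NormedAddCommGroup X] [NormedSpace 𝕂 X]
    {F : Set (Set ℕ)} (huniv : Set.univ ∈ F) (c : 𝕂)
    {u : ℕ → X} {x : X} (hu : FLim F u x) :
    FLim F (fun m => c • u m) (c • x) := by
  rcases eq_or_ne c 0 with rfl | hc
  · intro ε hε
    exact ⟨Set.univ, huniv, fun m _ => by simpa using hε⟩
  · intro ε hε
    have hcpos : 0 < ‖c‖ := norm_pos_iff.2 hc
    obtain ⟨A, hA, hAe⟩ := hu (ε / ‖c‖) (by positivity)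
    refine ⟨A, hA, fun m hm => ?_⟩
    rw [← smul_sub, norm_smul]
    calc ‖c‖ * ‖x - u m‖ < ‖c‖ * (ε / ‖c‖) := by
          exact mul_lt_mul_of_pos_left (hAe m hm) hcpos
      _ = ε := by field_simp

theorem analyticSet_inter_measurableSet' {α : Type*} [TopologicalSpace α] [PolishSpace α]
    [MeasurableSpace α] [BorelSpace α] {s t : Set α}
    (hs : MeasureTheory.AnalyticSet s) (ht : MeasurableSet t) :
    MeasureTheory.AnalyticSet (s ∩ t) := by
  rw [Set.inter_eq_iInter]
  refine MeasureTheory.AnalyticSet.iInter fun b => ?_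
  cases b with
  | false => simpa using ht.analyticSet
  | true => simpa using hs

/-- A measurable linear functional on a Banach space is continuous (Pettis-type theorem,
via Baire category). -/
theorem continuous_of_measurable_linearmap {𝕂 X : Type*} [RCLike 𝕂] [NormedAddCommGroup X]
    [NormedSpace 𝕂 X] [CompleteSpace X] [MeasurableSpace X] [BorelSpace X]
    (f : X →ₗ[𝕂] 𝕂) (hf : Measurable f) : Continuous f := by
  have hXne : Nonempty X := ⟨0⟩
  set C : ℕ → Set X := fun k => f ⁻¹' Metric.closedBall 0 (k : ℝ) with hC
  have hCmeas : ∀ k, MeasurableSet (C k) := fun k => hf measurableSet_closedBall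
  have hCunion : (⋃ k, C k) = Set.univ := by
    apply Set.eq_univ_of_forall
    intro x
    obtain ⟨k, hk⟩ := exists_nat_ge ‖f x‖
    exact Set.mem_iUnion.2 ⟨k, by simpa [hC, Metric.mem_closedBall, dist_zero_right] using hk⟩
  have hnonmeager : ∃ k, ¬ IsMeagre (C k) := by
    by_contra h
    push_neg at h
    have hmea : IsMeagre (⋃ k, C k) := isMeagre_iUnion h
    rw [hCunion, IsMeagre, Set.compl_univ] at hmea
    exact Set.not_nonempty_empty ((dense_of_mem_residual hmea).nonempty)
  obtain ⟨k, hk⟩ := hnonmeager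
  obtain ⟨U, hUo, hUe⟩ := ((hCmeas k).baireMeasurableSet).residualEq_isOpen
  have hR : {x : X | x ∈ C k ↔ x ∈ U} ∈ residual X := by
    filter_upwards [hUe] with x hx
    exact iff_of_eq hx
  have hUne : U.Nonempty := by
    rcases U.eq_empty_or_nonempty with h | h
    · exfalso
      apply hk
      rw [IsMeagre]
      refine Filter.mem_of_superset hR fun x hx hxC => ?_
      have hxU := hx.1 hxC
      rw [h] at hxU
      exact hxU
    · exact h
  obtain ⟨x₀, hx₀⟩ := hUne
  obtain ⟨r, hr, hball⟩ := Metric.isOpen_iff.1 hUo x₀ hx₀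
  have key : ∀ z : X, ‖z‖ < r / 2 → ‖f z‖ ≤ 2 * (k : ℝ) := by
    intro z hz
    have hcoe : ⇑(Homeomorph.addRight z) = fun w : X => w + z := rfl
    have hmap : (fun w : X => w + z) ⁻¹' {x : X | x ∈ C k ↔ x ∈ U} ∈ residual X := by
      have h2 := hR
      rw [← (Homeomorph.addRight z).residual_map_eq] at h2
      have := Filter.mem_map.1 h2
      rwa [hcoe] at this
    have hR' := Filter.inter_mem hR hmap
    have hdense := dense_of_mem_residual hR'
    have hballne : (Metric.ball x₀ (r / 2)).Nonempty :=
      ⟨x₀, Metric.mem_ball_self (by linarith)⟩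
    obtain ⟨w, hwR, hwball⟩ := hdense.exists_mem_open Metric.isOpen_ball hballne
    have hwU : w ∈ U := hball (Metric.ball_subset_ball (by linarith) hwball)
    have hwC : w ∈ C k := hwR.1.2 hwU
    have hwz : w + z ∈ Metric.ball x₀ r := by
      rw [Metric.mem_ball, dist_eq_norm]
      have h1 : w + z - x₀ = (w - x₀) + z := by abel
      rw [h1]
      have h2 : ‖w - x₀‖ < r / 2 := by
        have := Metric.mem_ball.1 hwball
        rwa [dist_eq_norm] at this
      calc ‖(w - x₀) + z‖ ≤ ‖w - x₀‖ + ‖z‖ := norm_add_le _ _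
        _ < r / 2 + r / 2 := add_lt_add h2 hz
        _ = r := by ring
    have hwzC : w + z ∈ C k := hwR.2.2 (hball hwz)
    have hb1 : ‖f w‖ ≤ (k : ℝ) := by
      simpa [hC, Metric.mem_closedBall, dist_zero_right] using hwC
    have hb2 : ‖f (w + z)‖ ≤ (k : ℝ) := by
      simpa [hC, Metric.mem_closedBall, dist_zero_right] using hwzC
    have hfz : f z = f (w + z) - f w := by rw [map_add]; ring
    calc ‖f z‖ = ‖f (w + z) - f w‖ := by rw [hfz]
      _ ≤ ‖f (w + z)‖ + ‖f w‖ := norm_sub_le _ _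
      _ ≤ (k : ℝ) + (k : ℝ) := add_le_add hb2 hb1
      _ = 2 * (k : ℝ) := by ring
  have hbound : ∀ x : X, ‖f x‖ ≤ (2 * (k : ℝ)) * (4 / r) * ‖x‖ := by
    intro x
    rcases eq_or_ne x 0 with rfl | hx
    · simp
    · have hnx : (0 : ℝ) < ‖x‖ := norm_pos_iff.2 hx
      set c : ℝ := r / (4 * ‖x‖) with hc
      have hcpos : 0 < c := by positivity
      have hnz : ‖(c : 𝕂) • x‖ = r / 4 := by
        rw [norm_smul, RCLike.norm_ofReal, abs_of_pos hcpos, hc]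
        field_simp
      have h1 : ‖f ((c : 𝕂) • x)‖ ≤ 2 * (k : ℝ) := key _ (by rw [hnz]; linarith)
      rw [_root_.map_smul, norm_smul, RCLike.norm_ofReal, abs_of_pos hcpos, hc] at h1
      rw [div_mul_eq_mul_div, div_le_iff₀ (by positivity)] at h1
      have hgoal : (2 * (k : ℝ)) * (4 / r) * ‖x‖ = (2 * (k : ℝ) * (4 * ‖x‖)) / r := by
        field_simp
      rw [hgoal, le_div_iff₀ hr]
      nlinarith [h1]
  exact AddMonoidHomClass.continuous_of_bound f ((2 * (k : ℝ)) * (4 / r)) hbound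

end AuxLemmas

/-- If `F` is an analytic filter on ℕ and `(e n)` is an `F`-basis of a Banach
space `X` over `𝕂 ∈ {ℝ, ℂ}`, then every coordinate functional `x ↦ coord x n` is continuous. -/
theorem continuous_coord_of_analytic_filter
    {𝕂 X : Type*} [RCLike 𝕂] [NormedAddCommGroup X] [NormedSpace 𝕂 X] [CompleteSpace X]
    (F : Set (Set ℕ)) (hF : IsFilterOnNat F) (hFa : IsAnalyticFamily F)
    (e : ℕ → X) (coord : X → ℕ → 𝕂) (hbasis : IsFBasis F e coord) :
    ∀ n : ℕ, Continuous fun x => coord x n := by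
  intro n
  classical
  obtain ⟨hInter, hUp, hCof⟩ := hF
  have huniv : (Set.univ : Set ℕ) ∈ F := hCof _ (by simp)
  -- every member of `F` is nonempty, otherwise the uniqueness in `IsFBasis` fails
  have hFne : ∀ A ∈ F, A.Nonempty := by
    intro A hA
    rcases A.eq_empty_or_nonempty with rfl | h
    · exfalso
      have htriv : ∀ b : ℕ → 𝕂, FLim F (fun m => ∑ i ∈ Finset.range m, b i • e i) (0 : X) :=
        fun b ε hε => ⟨∅, hA, fun m hm => absurd hm (Set.notMem_empty m)⟩
      have h0 := (hbasis 0).2 (fun _ => 0) (htriv _)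
      have h1 := (hbasis 0).2 (fun _ => 1) (htriv _)
      exact one_ne_zero (congrFun (h1.trans h0.symm) 0)
    · exact h
  have hpsum_cont : ∀ m : ℕ, Continuous fun b : ℕ → 𝕂 => ∑ i ∈ Finset.range m, b i • e i :=
    fun m => continuous_finset_sum _ fun i _ => (continuous_apply i).smul continuous_const
  -- `X` is separable, hence Polish
  haveI hsep : TopologicalSpace.SeparableSpace X := by
    rw [← TopologicalSpace.isSeparable_univ_iff]
    have hsub : (Set.univ : Set X) ⊆
        closure (⋃ m : ℕ, Set.range fun b : ℕ → 𝕂 => ∑ i ∈ Finset.range m, b i • e i) := by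
      intro x _
      rw [Metric.mem_closure_iff]
      intro ε hε
      obtain ⟨A, hA, hAe⟩ := (hbasis x).1 ε hε
      obtain ⟨m, hm⟩ := hFne A hA
      exact ⟨∑ i ∈ Finset.range m, coord x i • e i,
        Set.mem_iUnion.2 ⟨m, Set.mem_range_self _⟩,
        by rw [dist_eq_norm]; exact hAe m hm⟩
    exact ((TopologicalSpace.IsSeparable.iUnion fun m =>
      isSeparable_range (hpsum_cont m)).closure).mono hsub
  haveI : SecondCountableTopology X := UniformSpace.secondCountable_of_separable X
  haveI : PolishSpace (ℕ → Bool) := {}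
  borelize X 𝕂
  -- the graph of `coord`
  set Γ : Set (X × (ℕ → 𝕂)) := {p | p.2 = coord p.1} with hΓ
  have hΓiff : ∀ p : X × (ℕ → 𝕂),
      FLim F (fun m => ∑ i ∈ Finset.range m, p.2 i • e i) p.1 ↔ p ∈ Γ := by
    intro p
    constructor
    · exact fun h => (hbasis p.1).2 p.2 h
    · intro h
      have h' : p.2 = coord p.1 := h
      rw [h']
      exact (hbasis p.1).1
  -- the graph is analytic
  have hΓa : MeasureTheory.AnalyticSet Γ := by
    have hGeq : Γ = ⋂ j : ℕ, (fun w : (X × (ℕ → 𝕂)) × (ℕ → Bool) => w.1) ''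
        {w : (X × (ℕ → 𝕂)) × (ℕ → Bool) | w.2 ∈ toCantor F ∧
          ∀ m : ℕ, w.2 m = true →
            ‖w.1.1 - ∑ i ∈ Finset.range m, w.1.2 i • e i‖ < 1 / (j + 1)} := by
      ext p
      rw [← hΓiff p]
      simp only [Set.mem_iInter, Set.mem_image, Set.mem_setOf_eq]
      constructor
      · intro h j
        have hj : (0 : ℝ) < 1 / ((j : ℝ) + 1) := by positivity
        obtain ⟨A, hA, hAe⟩ := h _ hj
        refine ⟨(p, fun m => decide (m ∈ A)), ⟨?_, ?_⟩, rfl⟩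
        · have hset : {m : ℕ | decide (m ∈ A) = true} = A := by ext m; simp
          show {m : ℕ | decide (m ∈ A) = true} ∈ F
          rw [hset]; exact hA
        · intro m hm
          exact hAe m (by simpa using hm)
      · intro h ε hε
        obtain ⟨j, hj⟩ := exists_nat_one_div_lt hε
        obtain ⟨w, ⟨hw1, hw2⟩, hw3⟩ := h j
        refine ⟨{m | w.2 m = true}, hw1, fun m hm => ?_⟩
        have hlt := hw2 m hm
        rw [hw3] at hlt
        exact hlt.trans hj
    rw [hGeq]
    refine MeasureTheory.AnalyticSet.iInter fun j => ?_
    refine MeasureTheory.AnalyticSet.image_of_continuous ?_ continuous_fst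
    have hSeq : {w : (X × (ℕ → 𝕂)) × (ℕ → Bool) | w.2 ∈ toCantor F ∧
          ∀ m : ℕ, w.2 m = true →
            ‖w.1.1 - ∑ i ∈ Finset.range m, w.1.2 i • e i‖ < 1 / (j + 1)} =
        (Prod.snd ⁻¹' toCantor F) ∩
          ⋂ m : ℕ, {w : (X × (ℕ → 𝕂)) × (ℕ → Bool) | w.2 m = true →
            ‖w.1.1 - ∑ i ∈ Finset.range m, w.1.2 i • e i‖ < 1 / (j + 1)} := by
      ext w
      simp [Set.mem_iInter]
    rw [hSeq]
    refine analyticSet_inter_measurableSet' ?_ ?_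
    · exact MeasureTheory.AnalyticSet.preimage hFa continuous_snd
    · refine MeasurableSet.iInter fun m => ?_
      have hset : {w : (X × (ℕ → 𝕂)) × (ℕ → Bool) | w.2 m = true →
            ‖w.1.1 - ∑ i ∈ Finset.range m, w.1.2 i • e i‖ < 1 / (j + 1)} =
          {w : (X × (ℕ → 𝕂)) × (ℕ → Bool) | w.2 m = true}ᶜ ∪
          {w : (X × (ℕ → 𝕂)) × (ℕ → Bool) |
            ‖w.1.1 - ∑ i ∈ Finset.range m, w.1.2 i • e i‖ < 1 / (j + 1)} := by
        ext w
        by_cases h : w.2 m = true <;> simp [h]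
      rw [hset]
      refine (IsOpen.union ?_ ?_).measurableSet
      · exact (isClosed_eq ((continuous_apply m).comp continuous_snd)
          continuous_const).isOpen_compl
      · exact isOpen_lt (Continuous.norm (Continuous.sub continuous_fst.fst
          ((hpsum_cont m).comp continuous_fst.snd))) continuous_const
  -- `coord` is Borel measurable
  have hmeas : Measurable fun x : X => (coord x : ℕ → 𝕂) := by
    apply measurable_of_isOpen
    intro U hU
    have hpre : ∀ V : Set (ℕ → 𝕂), (fun x : X => coord x) ⁻¹' V =
        Prod.fst '' (Γ ∩ (Set.univ ×ˢ V)) := by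
      intro V
      ext x
      constructor
      · intro hx
        exact ⟨(x, coord x), ⟨rfl, ⟨trivial, hx⟩⟩, rfl⟩
      · rintro ⟨⟨x', b⟩, ⟨hb, -, hbV⟩, rfl⟩
        have hb' : b = coord x' := hb
        exact Set.mem_preimage.2 (hb' ▸ hbV)
    have h1 : MeasureTheory.AnalyticSet ((fun x : X => coord x) ⁻¹' U) := by
      rw [hpre U]
      exact (analyticSet_inter_measurableSet' hΓa
        ((isOpen_univ.prod hU).measurableSet)).image_of_continuous continuous_fst
    have h2 : MeasureTheory.AnalyticSet ((fun x : X => coord x) ⁻¹' U)ᶜ := by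
      rw [← Set.preimage_compl, hpre Uᶜ]
      exact (analyticSet_inter_measurableSet' hΓa
        (MeasurableSet.univ.prod hU.isClosed_compl.measurableSet)).image_of_continuous
        continuous_fst
    exact h1.measurableSet_of_compl h2
  have hfm : Measurable fun x : X => coord x n := (measurable_pi_apply n).comp hmeas
  -- linearity of the coordinate functionals
  have hadd : ∀ x y : X, coord (x + y) = fun i => coord x i + coord y i := by
    intro x y
    refine ((hbasis (x + y)).2 _ ?_).symm
    have h := flim_add' hInter (hbasis x).1 (hbasis y).1
    have heq : (fun m => (∑ i ∈ Finset.range m, coord x i • e i) +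
          ∑ i ∈ Finset.range m, coord y i • e i) =
        fun m => ∑ i ∈ Finset.range m, (coord x i + coord y i) • e i := by
      funext m
      rw [← Finset.sum_add_distrib]
      simp [add_smul]
    exact heq ▸ h
  have hsmul : ∀ (c : 𝕂) (x : X), coord (c • x) = fun i => c * coord x i := by
    intro c x
    refine ((hbasis (c • x)).2 _ ?_).symm
    have h := flim_smul' huniv c (hbasis x).1
    have heq : (fun m => c • ∑ i ∈ Finset.range m, coord x i • e i) =
        fun m => ∑ i ∈ Finset.range m, (c * coord x i) • e i := by
      funext m
      rw [Finset.smul_sum]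
      simp [smul_smul]
    exact heq ▸ h
  let L : X →ₗ[𝕂] 𝕂 :=
    { toFun := fun x => coord x n
      map_add' := fun x y => by
        show coord (x + y) n = coord x n + coord y n
        rw [hadd]
      map_smul' := fun c x => by
        show coord (c • x) n = c * coord x n
        rw [hsmul] }
  exact continuous_of_measurable_linearmap L hfm
end

section
/- Let 𝓕_st be the filter of statistical convergence, i.e. the filter of all subsets A ⊆ ℕ of asymptotic density 1 (meaning |A ∩ {1,…,n}|/n → 1 as n → ∞). If X is a Banach space with an 𝓕_st-basis (e_n)_{n=1}^∞, then every coordinate functional e_n* : X → 𝕂 is continuous. -/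
open Filter Topology MeasureTheory TopologicalSpace

section BaireAux
open Set

variable {α : Type*} [TopologicalSpace α]

lemma isMeagre_iUnion' {ι : Type*} [Countable ι] {f : ι → Set α}
    (h : ∀ i, IsMeagre (f i)) : IsMeagre (⋃ i, f i) := by
  rw [IsMeagre, compl_iUnion]
  exact countable_iInter_mem.2 h

lemma isMeagre_biUnion' {ι : Type*} {S : Set ι} (hc : S.Countable) {f : ι → Set α}
    (h : ∀ i ∈ S, IsMeagre (f i)) : IsMeagre (⋃ i ∈ S, f i) := by
  haveI := hc.to_subtype
  rw [biUnion_eq_iUnion]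
  exact isMeagre_iUnion' fun i => h i i.2

lemma isMeagre_union' {s t : Set α} (hs : IsMeagre s) (ht : IsMeagre t) : IsMeagre (s ∪ t) := by
  rw [IsMeagre, compl_union]
  exact Filter.inter_mem hs ht

lemma residualEq_of_diffs {s t : Set α} (h1 : IsMeagre (s \ t)) (h2 : IsMeagre (t \ s)) :
    s =ᵇ t := by
  rw [Filter.eventuallyEq_set]
  filter_upwards [Filter.inter_mem h1 h2] with x hx
  rcases hx with ⟨hx1, hx2⟩
  simp only [mem_compl_iff, mem_diff, not_and, not_not] at hx1 hx2
  tauto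

lemma isMeagre_closure_diff_of_isOpen {u : Set α} (hu : IsOpen u) :
    IsMeagre (closure u \ u) := by
  rw [← hu.frontier_eq, IsMeagre]
  apply residual_of_dense_open isClosed_frontier.isOpen_compl
  rw [← interior_eq_empty_iff_dense_compl, ← frontier_compl]
  exact interior_frontier (isClosed_compl_iff.2 hu)

/-- Baire hull: every set is contained in a Baire measurable set which is minimal
modulo meager sets. -/
lemma exists_baire_hull [SecondCountableTopology α] (A : Set α) :
    ∃ B : Set α, A ⊆ B ∧ BaireMeasurableSet B ∧
      ∀ C : Set α, BaireMeasurableSet C → A ⊆ C → IsMeagre (B \ C) := by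
  classical
  set 𝒮 : Set (Set α) := {U ∈ countableBasis α | IsMeagre (U ∩ A)} with h𝒮
  set W : Set α := ⋃₀ 𝒮 with hW
  have hWopen : IsOpen W :=
    isOpen_sUnion fun U hU => isOpen_of_mem_countableBasis hU.1
  have hWA : IsMeagre (W ∩ A) := by
    have hcnt : 𝒮.Countable := (countable_countableBasis α).mono fun U hU => hU.1
    have hsub : W ∩ A ⊆ ⋃ U ∈ 𝒮, (U ∩ A) := by
      rintro x ⟨⟨U, hU, hxU⟩, hxA⟩
      exact mem_biUnion hU ⟨hxU, hxA⟩
    exact (isMeagre_biUnion' hcnt fun U hU => hU.2).mono hsub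
  have hWmax : ∀ V : Set α, IsOpen V → IsMeagre (V ∩ A) → V ⊆ W := by
    intro V hV hVA
    obtain ⟨T, hT𝒮, rfl⟩ := (isBasis_countableBasis α).open_eq_sUnion hV
    intro x hx
    rcases hx with ⟨U, hU, hxU⟩
    exact ⟨U, ⟨hT𝒮 hU, hVA.mono (inter_subset_inter_left A (subset_sUnion_of_mem hU))⟩, hxU⟩
  refine ⟨Wᶜ ∪ A, subset_union_right, ?_, ?_⟩
  · refine (hWopen.baireMeasurableSet.compl).congr (residualEq_of_diffs ?_ ?_)
    · exact IsMeagre.empty.mono (fun x hx => (hx.2 (Or.inl hx.1)).elim)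
    · exact hWA.mono (fun x hx => show x ∈ W ∩ A from ⟨not_not.1 hx.2, hx.1.resolve_left hx.2⟩)
  · intro C hC hAC
    obtain ⟨u, huo, hCu⟩ := hC.residualEq_isOpen
    have hE : {x | x ∈ C ↔ x ∈ u} ∈ residual α := Filter.eventuallyEq_set.1 hCu
    have hEm : IsMeagre {x | ¬ (x ∈ C ↔ x ∈ u)} := by
      rw [IsMeagre]
      convert hE using 1
      ext x
      simp
    have hext : (closure u)ᶜ ⊆ W := by
      apply hWmax _ isClosed_closure.isOpen_compl
      refine hEm.mono ?_
      rintro x ⟨hxcl, hxA⟩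
      intro hiff
      exact hxcl (subset_closure (hiff.1 (hAC hxA)))
    have hbig : IsMeagre ({x | ¬ (x ∈ C ↔ x ∈ u)} ∪ (closure u \ u) ∪ (W ∩ A)) :=
      (isMeagre_union' (isMeagre_union' hEm (isMeagre_closure_diff_of_isOpen huo)) hWA)
    refine hbig.mono ?_
    rintro x ⟨hxB, hxC⟩
    rcases hxB with hxW | hxA
    · have hxcl : x ∈ closure u := by
        by_contra h
        exact hxW (hext h)
      by_cases hxu : x ∈ u
      · exact Or.inl (Or.inl (fun hiff => hxC (hiff.2 hxu)))
      · exact Or.inl (Or.inr ⟨hxcl, hxu⟩)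
    · exact (hxC (hAC hxA)).elim

/-- Analytic sets in a second countable metric space have the Baire property. -/
theorem AnalyticSet.baireMeasurableSet'' {β : Type*} [MetricSpace β] [SecondCountableTopology β]
    {A : Set β} (hA : MeasureTheory.AnalyticSet A) : BaireMeasurableSet A := by
  classical
  rw [MeasureTheory.AnalyticSet] at hA
  rcases hA with rfl | ⟨f, fc, rfl⟩
  · exact IsMeagre.empty.baireMeasurableSet
  -- cylinders
  set cyl : List ℕ → Set (ℕ → ℕ) := fun s => {g | ∀ i < s.length, s[i]? = some (g i)} with hcyl
  set As : List ℕ → Set β := fun s => f '' cyl s with hAs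
  obtain ⟨Bh, hsub, hBP, hhull⟩ :
      ∃ Bh : List ℕ → Set β, (∀ s, As s ⊆ Bh s) ∧ (∀ s, BaireMeasurableSet (Bh s)) ∧
        ∀ s, ∀ C : Set β, BaireMeasurableSet C → As s ⊆ C → IsMeagre (Bh s \ C) := by
    choose Bh h1 h2 h3 using fun s : List ℕ => exists_baire_hull (As s)
    exact ⟨Bh, h1, h2, h3⟩
  set Bs : List ℕ → Set β := fun s => Bh s ∩ closure (As s) with hBs
  have hBsBP : ∀ s, BaireMeasurableSet (Bs s) := fun s =>
    (hBP s).inter ((isClosed_closure.isOpen_compl.baireMeasurableSet).of_compl)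
  have hAsBs : ∀ s, As s ⊆ Bs s := fun s => subset_inter (hsub s) subset_closure
  have hsplit : ∀ s : List ℕ, As s ⊆ ⋃ n, As (s ++ [n]) := by
    rintro s x ⟨g, hg, rfl⟩
    refine Set.mem_iUnion.2 ⟨g s.length, ⟨g, ?_, rfl⟩⟩
    intro i hi
    rw [List.length_append, List.length_singleton] at hi
    rcases Nat.lt_succ_iff_lt_or_eq.1 hi with hi | rfl
    · rw [List.getElem?_append_left hi]
      exact hg i hi
    · exact List.getElem?_concat_length
  have hstepm : ∀ s : List ℕ, IsMeagre (Bs s \ ⋃ n, Bs (s ++ [n])) := by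
    intro s
    have hU : BaireMeasurableSet (⋃ n, Bs (s ++ [n])) := BaireMeasurableSet.iUnion fun n => hBsBP _
    have hAU : As s ⊆ ⋃ n, Bs (s ++ [n]) :=
      (hsplit s).trans (Set.iUnion_mono fun n => hAsBs _)
    exact (hhull s _ hU hAU).mono (Set.diff_subset_diff_left Set.inter_subset_left)
  set M : Set β := ⋃ s : List ℕ, (Bs s \ ⋃ n, Bs (s ++ [n])) with hM
  have hMm : IsMeagre M := isMeagre_iUnion' hstepm
  -- range f ⊆ Bs []
  have hcyl0 : cyl [] = Set.univ := by ext g; simp [hcyl]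
  have hArange : Set.range f = As [] := by
    rw [show As [] = f '' cyl [] from rfl, hcyl0, Set.image_univ]
  have h1 : Set.range f ⊆ Bs [] := hArange.le.trans (hAsBs [])
  -- Bs [] \ M ⊆ range f
  have h2 : Bs [] \ M ⊆ Set.range f := by
    rintro x ⟨hx0, hxM⟩
    have step : ∀ s : List ℕ, x ∈ Bs s → ∃ n, x ∈ Bs (s ++ [n]) := by
      intro s hs
      by_contra h
      push_neg at h
      exact hxM (Set.mem_iUnion.2 ⟨s, hs, fun hmem => by
        rcases Set.mem_iUnion.1 hmem with ⟨n, hn⟩; exact h n hn⟩)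
    choose nxt hnxt using step
    -- build the branch
    let L : ℕ → {s : List ℕ // x ∈ Bs s} := fun k =>
      Nat.rec ⟨[], hx0⟩ (fun _ p => ⟨p.1 ++ [nxt p.1 p.2], hnxt p.1 p.2⟩) k
    set y : ℕ → ℕ := fun k => nxt (L k).1 (L k).2 with hy
    have hLsucc : ∀ k, (L (k+1)).1 = (L k).1 ++ [y k] := fun k => rfl
    have hLval : ∀ k, (L k).1 = (List.range k).map y := by
      intro k
      induction k with
      | zero => rfl
      | succ k ih => rw [hLsucc, ih, List.range_succ, List.map_append]; rfl
    have hxcl : ∀ k, x ∈ closure (As ((List.range k).map y)) := fun k => by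
      have h := ((L k).2).2
      rwa [hLval k] at h
    -- y is in each cylinder
    have hycyl : ∀ k, y ∈ cyl ((List.range k).map y) := by
      intro k i hi
      rw [List.length_map, List.length_range] at hi
      rw [List.getElem?_map, List.getElem?_range hi]
      rfl
    -- choose approximating points
    have happrox : ∀ k : ℕ, ∃ g ∈ cyl ((List.range k).map y), dist x (f g) < 1/(k+1) := by
      intro k
      have := Metric.mem_closure_iff.1 (hxcl k) (1/(k+1)) (by positivity)
      rcases this with ⟨z, ⟨g, hg, rfl⟩, hz⟩
      exact ⟨g, hg, hz⟩
    choose g hg hgd using happrox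
    have hgy : Filter.Tendsto g Filter.atTop (nhds y) := by
      rw [tendsto_pi_nhds]
      intro i
      apply tendsto_nhds_of_eventually_eq
      filter_upwards [Filter.eventually_gt_atTop i] with k hk
      have h1 := hg k i (by simpa using hk)
      have h2 := hycyl k i (by simpa using hk)
      rw [h1] at h2
      exact Option.some_injective _ h2
    have hfg : Filter.Tendsto (fun k => f (g k)) Filter.atTop (nhds (f y)) :=
      (fc.tendsto y).comp hgy
    have hfx : Filter.Tendsto (fun k => f (g k)) Filter.atTop (nhds x) := by
      rw [tendsto_iff_dist_tendsto_zero]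
      refine squeeze_zero (fun k => dist_nonneg) (fun k => ?_) tendsto_one_div_add_atTop_nhds_zero_nat
      rw [dist_comm]
      exact (hgd k).le
    exact ⟨y, (tendsto_nhds_unique hfg hfx).symm ▸ rfl⟩
  refine (hBsBP []).congr (residualEq_of_diffs ?_ ?_)
  · exact hMm.mono (fun x hx => by
      by_contra hxM
      exact hx.2 (h2 ⟨hx.1, hxM⟩))
  · exact IsMeagre.empty.mono (fun x hx => (hx.2 (h1 hx.1)).elim)

end BaireAux


lemma pettis_category {G : Type*} [NormedAddCommGroup G] [BaireSpace G] {S : Set G}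
    (hS : BaireMeasurableSet S) (hnm : ¬ IsMeagre S) :
    ∃ r : ℝ, 0 < r ∧ ∀ z : G, ‖z‖ < r → ∃ a ∈ S, ∃ b ∈ S, z = a - b := by
  obtain ⟨u, huo, hSu⟩ := hS.residualEq_isOpen
  have hE : {x | x ∈ S ↔ x ∈ u} ∈ residual G := Filter.eventuallyEq_set.1 hSu
  have hu : u.Nonempty := by
    rcases u.eq_empty_or_nonempty with rfl | h
    · exfalso
      apply hnm
      rw [IsMeagre]
      refine Filter.mem_of_superset hE ?_
      intro x hx
      simp only [Set.mem_setOf_eq, Set.mem_empty_iff_false, iff_false] at hx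
      exact hx
    · exact h
  obtain ⟨w, hw⟩ := hu
  obtain ⟨ρ, ρpos, hball⟩ := Metric.isOpen_iff.1 huo w hw
  refine ⟨ρ/2, by positivity, fun z hz => ?_⟩
  have hE' : (fun v => v - z) ⁻¹' {x | x ∈ S ↔ x ∈ u} ∈ residual G := by
    have := (Homeomorph.subRight z).residual_map_eq
    rw [← this] at hE
    exact hE
  have hD : Dense ({x | x ∈ S ↔ x ∈ u} ∩ (fun v => v - z) ⁻¹' {x | x ∈ S ↔ x ∈ u}) :=
    dense_of_mem_residual (Filter.inter_mem hE hE')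
  have hVo : IsOpen (Metric.ball (w + z) (ρ/2)) := Metric.isOpen_ball
  have hVne : (Metric.ball (w + z) (ρ/2)).Nonempty := ⟨w + z, by simp [Metric.mem_ball]; positivity⟩
  obtain ⟨v, hvD, hvV⟩ := hD.exists_mem_open hVo hVne
  have hvu : v ∈ u := by
    apply hball
    rw [Metric.mem_ball] at hvV ⊢
    calc dist v w ≤ dist v (w + z) + dist (w + z) w := dist_triangle _ _ _
      _ < ρ/2 + ρ/2 := by
          refine add_lt_add hvV ?_
          rw [dist_eq_norm]
          simpa using hz
      _ = ρ := by ring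
  have hvzu : v - z ∈ u := by
    apply hball
    rw [Metric.mem_ball, dist_eq_norm] at hvV ⊢
    have : v - z - w = v - (w + z) := by abel
    rw [this]
    exact hvV.trans (by linarith)
  exact ⟨v, hvD.1.2 hvu, v - z, hvD.2.2 hvzu, by abel⟩




lemma aux_ind_le {A B : Set ℕ} (i : ℕ) :
    Set.indicator (A ∩ B) (fun _ => (1:ℝ)) i ≤ Set.indicator A (fun _ => (1:ℝ)) i := by
  by_cases hA : i ∈ A <;> by_cases hB : i ∈ B <;>
    simp [Set.indicator_apply, hA, hB, Set.mem_inter_iff]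

lemma aux_ind_ge {A B : Set ℕ} (i : ℕ) :
    Set.indicator A (fun _ => (1:ℝ)) i + Set.indicator B (fun _ => (1:ℝ)) i - 1 ≤
      Set.indicator (A ∩ B) (fun _ => (1:ℝ)) i := by
  by_cases hA : i ∈ A <;> by_cases hB : i ∈ B <;>
    simp [Set.indicator_apply, hA, hB, Set.mem_inter_iff]

lemma statFilter_inter {A B : Set ℕ} (hA : A ∈ statFilter) (hB : B ∈ statFilter) :
    A ∩ B ∈ statFilter := by
  set dA := fun n : ℕ => (∑ i ∈ Finset.range n, Set.indicator A (fun _ => (1 : ℝ)) i) / n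
  set dB := fun n : ℕ => (∑ i ∈ Finset.range n, Set.indicator B (fun _ => (1 : ℝ)) i) / n
  set dC := fun n : ℕ => (∑ i ∈ Finset.range n, Set.indicator (A ∩ B) (fun _ => (1 : ℝ)) i) / n
  have hlow : Tendsto (fun n => dA n + dB n - 1) atTop (nhds 1) := by
    have := (hA.add hB).sub (tendsto_const_nhds (x := (1:ℝ)))
    simpa using this
  refine tendsto_of_tendsto_of_tendsto_of_le_of_le' hlow hA ?_ ?_
  · filter_upwards [eventually_ge_atTop 1] with n hn
    have hnpos : (0:ℝ) < n := by exact_mod_cast hn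
    have hsum : (∑ i ∈ Finset.range n, Set.indicator A (fun _ => (1:ℝ)) i)
        + (∑ i ∈ Finset.range n, Set.indicator B (fun _ => (1:ℝ)) i) - n ≤
        ∑ i ∈ Finset.range n, Set.indicator (A ∩ B) (fun _ => (1:ℝ)) i := by
      have := Finset.sum_le_sum (fun i (_ : i ∈ Finset.range n) => aux_ind_ge (A := A) (B := B) i)
      simpa [Finset.sum_sub_distrib, Finset.sum_add_distrib] using this
    have : ((∑ i ∈ Finset.range n, Set.indicator A (fun _ => (1:ℝ)) i)
        + (∑ i ∈ Finset.range n, Set.indicator B (fun _ => (1:ℝ)) i) - n) / n ≤ dC n :=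
      div_le_div_of_nonneg_right hsum hnpos.le |>.trans_eq rfl
    calc dA n + dB n - 1
        = ((∑ i ∈ Finset.range n, Set.indicator A (fun _ => (1:ℝ)) i)
        + (∑ i ∈ Finset.range n, Set.indicator B (fun _ => (1:ℝ)) i) - n) / n := by
          simp only [dA, dB]; field_simp
      _ ≤ dC n := this
  · filter_upwards [] with n
    rcases Nat.eq_zero_or_pos n with rfl | hn
    · simp [dC, dA]
    · have hnpos : (0:ℝ) < n := by exact_mod_cast hn
      exact div_le_div_of_nonneg_right
        (Finset.sum_le_sum (fun i _ => aux_ind_le (A := A) (B := B) i)) hnpos.le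

lemma statFilter_nonempty {A : Set ℕ} (hA : A ∈ statFilter) : A.Nonempty := by
  rcases A.eq_empty_or_nonempty with rfl | h
  · exfalso
    have h0 : Tendsto (fun n : ℕ =>
        (∑ i ∈ Finset.range n, Set.indicator (∅ : Set ℕ) (fun _ => (1 : ℝ)) i) / n)
        atTop (nhds 0) := by
      simp
    exact zero_ne_one (tendsto_nhds_unique h0 hA)
  · exact h



noncomputable def Dfun (m : ℕ) (f : ℕ → Bool) : ℝ :=
  (∑ i ∈ Finset.range m, Set.indicator {j | f j = true} (fun _ => (1 : ℝ)) i) / m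

lemma continuous_Dfun (m : ℕ) : Continuous (Dfun m) := by
  have : Dfun m = fun f => (∑ i ∈ Finset.range m, (if f i = true then (1:ℝ) else 0)) / m := by
    funext f
    unfold Dfun
    congr 1
    refine Finset.sum_congr rfl fun i _ => ?_
    simp [Set.indicator_apply]
  rw [this]
  refine Continuous.div_const ?_ _
  refine continuous_finset_sum _ fun i _ => ?_
  exact ((continuous_of_discreteTopology (f := fun b : Bool => if b = true then (1:ℝ) else 0))).comp
    (continuous_apply i)

lemma measurableSet_statCantor :
    MeasurableSet {f : ℕ → Bool | {j | f j = true} ∈ statFilter} := by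
  have hT : {f : ℕ → Bool | {j | f j = true} ∈ statFilter} =
      ⋂ (K : ℕ), ⋃ (N : ℕ), ⋂ (m : ℕ), {f | N ≤ m → dist (Dfun m f) 1 < 1/(K+1)} := by
    ext f
    simp only [Set.mem_iInter, Set.mem_iUnion, Set.mem_setOf_eq]
    constructor
    · intro h K
      obtain ⟨N, hN⟩ := (Metric.tendsto_atTop.1 h (1/(K+1)) (by positivity))
      exact ⟨N, fun m hm => hN m hm⟩
    · intro h
      rw [show ({j | f j = true} ∈ statFilter) =
        Tendsto (fun m => Dfun m f) atTop (nhds 1) from rfl]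
      rw [Metric.tendsto_atTop]
      intro ε εpos
      obtain ⟨K, hK⟩ := exists_nat_one_div_lt εpos
      obtain ⟨N, hN⟩ := h K
      exact ⟨N, fun m hm => (hN m hm).trans hK⟩
  rw [hT]
  refine MeasurableSet.iInter fun K => MeasurableSet.iUnion fun N => MeasurableSet.iInter fun m => ?_
  by_cases hNm : N ≤ m
  · simp only [hNm, forall_true_left]
    exact (isOpen_lt ((continuous_Dfun m).dist continuous_const) continuous_const).measurableSet
  · simp only [hNm, IsEmpty.forall_iff]
    rw [show {f : ℕ → Bool | True} = Set.univ from rfl]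
    exact MeasurableSet.univ





section CoordAlgebra

variable {𝕂 X : Type*} [RCLike 𝕂] [NormedAddCommGroup X] [NormedSpace 𝕂 X]
  {e : ℕ → X} {coord : X → ℕ → 𝕂}

-- inserted: statFilter lemmas (from partA)

lemma coord_sub' (hbasis : IsFBasis statFilter e coord) (x y : X) :
    coord (x - y) = fun i => coord x i - coord y i := by
  refine ((hbasis (x - y)).2 _ ?_).symm
  intro ε εpos
  obtain ⟨A, hA, hAx⟩ := (hbasis x).1 (ε/2) (by positivity)
  obtain ⟨B, hB, hBy⟩ := (hbasis y).1 (ε/2) (by positivity)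
  refine ⟨A ∩ B, statFilter_inter hA hB, fun m hm => ?_⟩
  have hsum : ∑ i ∈ Finset.range m, (coord x i - coord y i) • e i =
      (∑ i ∈ Finset.range m, coord x i • e i) - (∑ i ∈ Finset.range m, coord y i • e i) := by
    rw [← Finset.sum_sub_distrib]
    exact Finset.sum_congr rfl fun i _ => sub_smul _ _ _
  show ‖x - y - ∑ i ∈ Finset.range m, (coord x i - coord y i) • e i‖ < ε
  rw [hsum, sub_sub_sub_comm]
  calc ‖(x - ∑ i ∈ Finset.range m, coord x i • e i) -
        (y - ∑ i ∈ Finset.range m, coord y i • e i)‖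
      ≤ ‖x - ∑ i ∈ Finset.range m, coord x i • e i‖ +
        ‖y - ∑ i ∈ Finset.range m, coord y i • e i‖ := norm_sub_le _ _
    _ < ε/2 + ε/2 := add_lt_add (hAx m hm.1) (hBy m hm.2)
    _ = ε := by ring

lemma coord_smul' (hbasis : IsFBasis statFilter e coord) (c : 𝕂) (x : X) :
    coord (c • x) = fun i => c * coord x i := by
  refine ((hbasis (c • x)).2 _ ?_).symm
  intro ε εpos
  obtain ⟨A, hA, hAx⟩ := (hbasis x).1 (ε/(‖c‖+1)) (by positivity)
  refine ⟨A, hA, fun m hm => ?_⟩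
  have hsum : ∑ i ∈ Finset.range m, (c * coord x i) • e i =
      c • ∑ i ∈ Finset.range m, coord x i • e i := by
    rw [Finset.smul_sum]
    exact Finset.sum_congr rfl fun i _ => (smul_smul c _ _).symm
  show ‖c • x - ∑ i ∈ Finset.range m, (c * coord x i) • e i‖ < ε
  rw [hsum, ← smul_sub, norm_smul]
  have h1 : (0:ℝ) < ‖c‖ + 1 := by positivity
  have h2 : ‖x - ∑ i ∈ Finset.range m, coord x i • e i‖ * (‖c‖ + 1) < ε :=
    (lt_div_iff₀ h1).1 (hAx m hm)
  nlinarith [norm_nonneg c, norm_nonneg (x - ∑ i ∈ Finset.range m, coord x i • e i)]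

end CoordAlgebra


/-- For the filter of statistical convergence `statFilter`, the coordinate
functionals of any `statFilter`-basis of a Banach space are continuous. -/
theorem continuous_coord_of_statFilter_basis
    {𝕂 X : Type*} [RCLike 𝕂] [NormedAddCommGroup X] [NormedSpace 𝕂 X] [CompleteSpace X]
    (e : ℕ → X) (coord : X → ℕ → 𝕂) (hbasis : IsFBasis statFilter e coord) :
    ∀ n : ℕ, Continuous fun x => coord x n := by
  classical
  intro n
  -- partial sum maps are continuous in the coefficients
  have hScont : ∀ m : ℕ, Continuous (fun b : ℕ → 𝕂 => ∑ i ∈ Finset.range m, b i • e i) :=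
    fun m => continuous_finset_sum _ fun i _ => (continuous_apply i).smul continuous_const
  -- X is separable
  haveI hsepX : SeparableSpace X := by
    rw [← isSeparable_univ_iff]
    have hD : IsSeparable (⋃ m : ℕ, Set.range (fun b : ℕ → 𝕂 =>
        ∑ i ∈ Finset.range m, b i • e i)) :=
      isSeparable_iUnion.2 fun m => isSeparable_range (hScont m)
    refine hD.closure.mono ?_
    intro x _
    rw [Metric.mem_closure_iff]
    intro ε εpos
    obtain ⟨A, hA, hAx⟩ := (hbasis x).1 ε εpos
    obtain ⟨m, hm⟩ := statFilter_nonempty hA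
    refine ⟨∑ i ∈ Finset.range m, coord x i • e i, ?_, ?_⟩
    · exact Set.mem_iUnion.2 ⟨m, ⟨coord x, rfl⟩⟩
    · rw [dist_eq_norm]; exact hAx m hm
  haveI : SecondCountableTopology X := UniformSpace.secondCountable_of_separable X
  haveI : PolishSpace X := inferInstance
  haveI : SeparableSpace (X × (ℕ → 𝕂) × (ℕ → ℕ → Bool)) := inferInstance
  borelize X
  haveI hB2 : BorelSpace ((ℕ → 𝕂) × (ℕ → ℕ → Bool)) := inferInstance
  haveI hBP : BorelSpace (X × (ℕ → 𝕂) × (ℕ → ℕ → Bool)) := Prod.borelSpace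
  -- the sets G C
  set G : ℕ → Set (X × (ℕ → 𝕂) × (ℕ → ℕ → Bool)) := fun C =>
    (⋂ k : ℕ, (fun p : X × (ℕ → 𝕂) × (ℕ → ℕ → Bool) => p.2.2 k) ⁻¹'
      {f : ℕ → Bool | {j | f j = true} ∈ statFilter}) ∩
    ((⋂ k : ℕ, ⋂ m : ℕ, {p : X × (ℕ → 𝕂) × (ℕ → ℕ → Bool) |
      p.2.2 k m = true → ‖p.1 - ∑ i ∈ Finset.range m, p.2.1 i • e i‖ < 1/(k+1)}) ∩
    {p : X × (ℕ → 𝕂) × (ℕ → ℕ → Bool) | ‖p.2.1 n‖ ≤ C}) with hG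
  have hGmeas : ∀ C, MeasurableSet (G C) := by
    intro C
    refine MeasurableSet.inter ?_ (MeasurableSet.inter ?_ ?_)
    · refine MeasurableSet.iInter fun k => ?_
      exact measurableSet_statCantor.preimage
        (((continuous_apply k).comp (continuous_snd.comp continuous_snd)).measurable)
    · refine MeasurableSet.iInter fun k => MeasurableSet.iInter fun m => ?_
      have heq : {p : X × (ℕ → 𝕂) × (ℕ → ℕ → Bool) |
          p.2.2 k m = true → ‖p.1 - ∑ i ∈ Finset.range m, p.2.1 i • e i‖ < 1/(k+1)} =
          ((fun p : X × (ℕ → 𝕂) × (ℕ → ℕ → Bool) => p.2.2 k m) ⁻¹' {true})ᶜ ∪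
          {p : X × (ℕ → 𝕂) × (ℕ → ℕ → Bool) |
            ‖p.1 - ∑ i ∈ Finset.range m, p.2.1 i • e i‖ < 1/(k+1)} := by
        ext p
        simp only [Set.mem_setOf_eq, Set.mem_union, Set.mem_compl_iff, Set.mem_preimage,
          Set.mem_singleton_iff]
        tauto
      rw [heq]
      refine MeasurableSet.union ?_ ?_
      · exact (((continuous_apply m).comp ((continuous_apply k).comp
          (continuous_snd.comp continuous_snd))).measurable (measurableSet_singleton true)).compl
      · have hcont : Continuous (fun p : X × (ℕ → 𝕂) × (ℕ → ℕ → Bool) =>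
            ‖p.1 - ∑ i ∈ Finset.range m, p.2.1 i • e i‖) :=
          (continuous_fst.sub ((hScont m).comp (continuous_fst.comp continuous_snd))).norm
        exact (isOpen_lt hcont continuous_const).measurableSet
    · have hcont : Continuous (fun p : X × (ℕ → 𝕂) × (ℕ → ℕ → Bool) => ‖p.2.1 n‖) :=
        ((continuous_apply n).comp (continuous_fst.comp continuous_snd)).norm
      exact (isClosed_le hcont continuous_const).measurableSet
  -- projections
  set XC : ℕ → Set X := fun C => Prod.fst '' G C with hXC
  have hXCbp : ∀ C, BaireMeasurableSet (XC C) := fun C =>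
    AnalyticSet.baireMeasurableSet'' (((hGmeas C).analyticSet).image_of_continuous continuous_fst)
  -- covering
  have hcover : ∀ x : X, ∃ C : ℕ, x ∈ XC C := by
    intro x
    have h := fun k : ℕ => (hbasis x).1 (1/(k+1)) (by positivity)
    choose A hA hA2 using h
    obtain ⟨C, hC⟩ := exists_nat_ge ‖coord x n‖
    refine ⟨C, ⟨(x, coord x, fun k m => decide (m ∈ A k)), ?_, rfl⟩⟩
    simp only [hG, Set.mem_inter_iff, Set.mem_iInter, Set.mem_preimage, Set.mem_setOf_eq]
    refine ⟨fun k => ?_, ⟨fun k m hm => ?_, ?_⟩⟩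
    · have hset : {j | decide (j ∈ A k) = true} = A k := by
        ext j; simp [decide_eq_true_eq]
      rw [hset]
      exact hA k
    · exact hA2 k m (of_decide_eq_true hm)
    · exact hC
  -- some XC C is nonmeager
  have hnm : ∃ C : ℕ, ¬ IsMeagre (XC C) := by
    by_contra h
    push_neg at h
    have hmu : IsMeagre (⋃ C : ℕ, XC C) := isMeagre_iUnion' h
    have huniv : IsMeagre (Set.univ : Set X) := by
      refine hmu.mono ?_
      intro x _
      obtain ⟨C, hC⟩ := hcover x
      exact Set.mem_iUnion.2 ⟨C, hC⟩
    have hden : Dense (∅ : Set X) := by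
      apply dense_of_mem_residual
      rw [IsMeagre, Set.compl_univ] at huniv
      exact huniv
    haveI : Nonempty X := ⟨0⟩
    obtain ⟨z, hz⟩ := hden.nonempty
    exact hz
  obtain ⟨C, hC⟩ := hnm
  -- Pettis
  obtain ⟨r, hr, hrS⟩ := pettis_category (hXCbp C) hC
  -- bound on the ball
  have hball : ∀ z : X, ‖z‖ < r → ‖coord z n‖ ≤ 2 * C := by
    intro z hz
    obtain ⟨a, ha, b, hb, rfl⟩ := hrS z hz
    obtain ⟨pa, hpa, hpa1⟩ := ha
    obtain ⟨pb, hpb, hpb1⟩ := hb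
    simp only [hG, Set.mem_inter_iff, Set.mem_iInter, Set.mem_preimage, Set.mem_setOf_eq] at hpa hpb
    obtain ⟨hpa1', hpa2, hpa3⟩ := hpa
    obtain ⟨hpb1', hpb2, hpb3⟩ := hpb
    set b' : ℕ → 𝕂 := fun i => pa.2.1 i - pb.2.1 i with hb'
    have hflim : FLim statFilter (fun m => ∑ i ∈ Finset.range m, b' i • e i) (pa.1 - pb.1) := by
      intro ε εpos
      obtain ⟨k, hk⟩ := exists_nat_one_div_lt (show (0:ℝ) < ε/2 by positivity)
      refine ⟨{j | pa.2.2 k j = true} ∩ {j | pb.2.2 k j = true},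
        statFilter_inter (hpa1' k) (hpb1' k), fun m hm => ?_⟩
      have hsum : ∑ i ∈ Finset.range m, b' i • e i =
          (∑ i ∈ Finset.range m, pa.2.1 i • e i) - (∑ i ∈ Finset.range m, pb.2.1 i • e i) := by
        rw [← Finset.sum_sub_distrib]
        exact Finset.sum_congr rfl fun i _ => sub_smul _ _ _
      show ‖pa.1 - pb.1 - ∑ i ∈ Finset.range m, b' i • e i‖ < ε
      rw [hsum, sub_sub_sub_comm]
      calc ‖(pa.1 - ∑ i ∈ Finset.range m, pa.2.1 i • e i) -
            (pb.1 - ∑ i ∈ Finset.range m, pb.2.1 i • e i)‖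
          ≤ ‖pa.1 - ∑ i ∈ Finset.range m, pa.2.1 i • e i‖ +
            ‖pb.1 - ∑ i ∈ Finset.range m, pb.2.1 i • e i‖ := norm_sub_le _ _
        _ < 1/(k+1) + 1/(k+1) := add_lt_add (hpa2 k m hm.1) (hpb2 k m hm.2)
        _ < ε/2 + ε/2 := add_lt_add hk hk
        _ = ε := by ring
    have huniq : b' = coord (pa.1 - pb.1) := (hbasis (pa.1 - pb.1)).2 b' hflim
    rw [← hpa1, ← hpb1, ← huniq, hb']
    calc ‖pa.2.1 n - pb.2.1 n‖ ≤ ‖pa.2.1 n‖ + ‖pb.2.1 n‖ := norm_sub_le _ _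
      _ ≤ C + C := add_le_add hpa3 hpb3
      _ = 2 * C := by ring
  -- global bound
  set M : ℝ := 4 * (C + 1) / r with hM
  have hMpos : 0 < M := by positivity
  have hbound : ∀ x : X, ‖coord x n‖ ≤ M * ‖x‖ := by
    intro x
    rcases eq_or_ne x 0 with rfl | hx
    · have h0 : coord ((0:X) - 0) = fun i => coord (0:X) i - coord (0:X) i :=
        coord_sub' hbasis 0 0
      rw [sub_zero] at h0
      have : coord (0:X) n = 0 := by
        have := congrFun h0 n
        simpa using this
      simp [this]
    · have hxpos : (0:ℝ) < ‖x‖ := norm_pos_iff.2 hx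
      set c : 𝕂 := ((r / (2 * ‖x‖) : ℝ) : 𝕂) with hc
      have hcn : ‖c‖ = r / (2 * ‖x‖) := by
        rw [hc, RCLike.norm_ofReal, abs_of_pos (by positivity)]
      have hznorm : ‖c • x‖ < r := by
        rw [norm_smul, hcn]
        rw [div_mul_eq_mul_div, mul_comm]
        rw [show ‖x‖ * r / (2 * ‖x‖) = r / 2 by field_simp]
        linarith
      have h1 : ‖coord (c • x) n‖ ≤ 2 * C := hball _ hznorm
      have h2 : coord (c • x) n = c * coord x n := congrFun (coord_smul' hbasis c x) n
      rw [h2, norm_mul, hcn] at h1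
      have key2 : r * ‖coord x n‖ ≤ 2 * C * (2 * ‖x‖) := by
        have h2x : (0:ℝ) < 2 * ‖x‖ := by positivity
        calc r * ‖coord x n‖ = (r / (2 * ‖x‖) * ‖coord x n‖) * (2 * ‖x‖) := by field_simp
          _ ≤ 2 * C * (2 * ‖x‖) := mul_le_mul_of_nonneg_right h1 h2x.le
      rw [hM, div_mul_eq_mul_div, le_div_iff₀ hr]
      nlinarith [norm_nonneg x, norm_nonneg (coord x n)]
  -- continuity
  have hlip : LipschitzWith (Real.toNNReal M) (fun x => coord x n) := by
    apply LipschitzWith.of_dist_le_mul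
    intro x y
    rw [dist_eq_norm, dist_eq_norm]
    have hsub : coord x n - coord y n = coord (x - y) n := by
      have := congrFun (coord_sub' hbasis x y) n
      rw [this]
    rw [hsub]
    calc ‖coord (x - y) n‖ ≤ M * ‖x - y‖ := hbound _
      _ = (Real.toNNReal M : ℝ) * ‖x - y‖ := by
          rw [Real.coe_toNNReal _ hMpos.le]
  exact hlip.continuous
end

section
/- Let 𝓕 be an arbitrary filter on ℕ (not necessarily analytic or projective), X a Banach space, and (e_n)_{n=1}^∞ an 𝓕-basis for X whose coordinate functionals (e_n*) are all continuous. Then there exists an analytic filter 𝓕′ ⊆ 𝓕 on ℕ such that (e_n)_{n=1}^∞ is also an 𝓕′-basis for X (with the same coordinate functionals). -/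
open Filter Topology MeasureTheory TopologicalSpace

section Aux

variable {𝕂 X : Type*} [RCLike 𝕂] [NormedAddCommGroup X] [NormedSpace 𝕂 X]

/-- partial sums of the basis expansion -/
noncomputable def myPS (e : ℕ → X) (coord : X → ℕ → 𝕂) (n : ℕ) (x : X) : X :=
  ∑ i ∈ Finset.range n, coord x i • e i

/-- the analytic subfilter -/
def myF' (e : ℕ → X) (coord : X → ℕ → 𝕂) : Set (Set ℕ) :=
  {B | ∃ p : ℕ → X × ℝ, ∃ k m : ℕ, (∀ i < k, 0 < (p i).2) ∧
      ∀ n, m ≤ n → (∀ i < k, ‖(p i).1 - myPS e coord n (p i).1‖ < (p i).2) → n ∈ B}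

lemma myF'_upward {e : ℕ → X} {coord : X → ℕ → 𝕂} {A B : Set ℕ}
    (hA : A ∈ myF' e coord) (hAB : A ⊆ B) : B ∈ myF' e coord := by
  obtain ⟨p, k, m, hpos, hmem⟩ := hA
  exact ⟨p, k, m, hpos, fun n hn hc => hAB (hmem n hn hc)⟩

lemma myF'_cofinite {e : ℕ → X} {coord : X → ℕ → 𝕂} {A : Set ℕ}
    (hA : Aᶜ.Finite) : A ∈ myF' e coord := by
  obtain ⟨m, hm⟩ : BddAbove Aᶜ := hA.bddAbove
  refine ⟨fun _ => ((0 : X), (1 : ℝ)), 0, m + 1, by omega, fun n hn _ => ?_⟩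
  by_contra hnA
  exact absurd (hm hnA) (by omega)

lemma myF'_inter {e : ℕ → X} {coord : X → ℕ → 𝕂} {A B : Set ℕ}
    (hA : A ∈ myF' e coord) (hB : B ∈ myF' e coord) : A ∩ B ∈ myF' e coord := by
  obtain ⟨p₁, k₁, m₁, hpos₁, hmem₁⟩ := hA
  obtain ⟨p₂, k₂, m₂, hpos₂, hmem₂⟩ := hB
  refine ⟨fun i => if i < k₁ then p₁ i else p₂ (i - k₁), k₁ + k₂, max m₁ m₂, ?_, ?_⟩
  · intro i hi
    by_cases h : i < k₁
    · simpa [h] using hpos₁ i h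
    · simpa [h] using hpos₂ (i - k₁) (by omega)
  · intro n hn hc
    constructor
    · refine hmem₁ n (le_trans (le_max_left _ _) hn) fun i hi => ?_
      have := hc i (by omega)
      simpa [hi] using this
    · refine hmem₂ n (le_trans (le_max_right _ _) hn) fun i hi => ?_
      have := hc (k₁ + i) (by omega)
      simpa [Nat.add_sub_cancel_left, Nat.lt_irrefl, show ¬ (k₁ + i < k₁) by omega] using this

lemma myF'_isFilter (e : ℕ → X) (coord : X → ℕ → 𝕂) : IsFilterOnNat (myF' e coord) :=
  ⟨fun _ hA _ hB => myF'_inter hA hB, fun _ hA _ hAB => myF'_upward hA hAB,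
    fun _ hA => myF'_cofinite hA⟩

lemma myF'_subset {F : Set (Set ℕ)} (hF : IsFilterOnNat F) {e : ℕ → X} {coord : X → ℕ → 𝕂}
    (hU : ∀ (x : X) (ε : ℝ), 0 < ε → {n | ‖x - myPS e coord n x‖ < ε} ∈ F) :
    myF' e coord ⊆ F := by
  rintro B ⟨p, k, m, hpos, hmem⟩
  have key : ∀ j, j ≤ k →
      {n | m ≤ n ∧ ∀ i < j, ‖(p i).1 - myPS e coord n (p i).1‖ < (p i).2} ∈ F := by
    intro j
    induction j with
    | zero =>
      intro _
      have heq : {n : ℕ | m ≤ n ∧ ∀ i < 0, ‖(p i).1 - myPS e coord n (p i).1‖ < (p i).2}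
          = {n : ℕ | m ≤ n} := by
        ext n; simp
      rw [heq]
      refine hF.2.2 _ ?_
      have : {n : ℕ | m ≤ n}ᶜ = Set.Iio m := by ext n; simp
      rw [this]; exact Set.finite_Iio m
    | succ j ih =>
      intro hjk
      have heq : {n | m ≤ n ∧ ∀ i < j + 1, ‖(p i).1 - myPS e coord n (p i).1‖ < (p i).2}
          = {n | m ≤ n ∧ ∀ i < j, ‖(p i).1 - myPS e coord n (p i).1‖ < (p i).2}
            ∩ {n | ‖(p j).1 - myPS e coord n (p j).1‖ < (p j).2} := by
        ext n
        simp only [Set.mem_inter_iff, Set.mem_setOf_eq]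
        constructor
        · rintro ⟨hm, h⟩
          exact ⟨⟨hm, fun i hi => h i (by omega)⟩, h j (by omega)⟩
        · rintro ⟨⟨hm, h⟩, hj⟩
          refine ⟨hm, fun i hi => ?_⟩
          rcases Nat.lt_or_ge i j with h' | h'
          · exact h i h'
          · have : i = j := by omega
            subst this; exact hj
      rw [heq]
      exact hF.1 _ (ih (by omega)) _ (hU (p j).1 (p j).2 (hpos j (by omega)))
  refine hF.2.1 _ (key k le_rfl) _ ?_
  intro n hn
  exact hmem n hn.1 hn.2

end Aux

section Aux2

variable {𝕂 X : Type*} [RCLike 𝕂] [NormedAddCommGroup X] [NormedSpace 𝕂 X]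

lemma myF'_analytic [CompleteSpace X] [SecondCountableTopology X]
    [MeasurableSpace X] [BorelSpace X]
    {e : ℕ → X} {coord : X → ℕ → 𝕂}
    (hcont : ∀ n, Continuous (fun x => myPS e coord n x)) :
    IsAnalyticFamily (myF' e coord) := by
  classical
  let P := (ℕ → X × ℝ) × (ℕ → Bool)
  let B : ℕ × ℕ → Set P := fun q =>
    {z | (∀ i < q.1, 0 < (z.1 i).2) ∧
      ∀ n, q.2 ≤ n → (∀ i < q.1, ‖(z.1 i).1 - myPS e coord n (z.1 i).1‖ < (z.1 i).2) →
        z.2 n = true}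
  have hc1 : ∀ i : ℕ, Continuous fun z : P => (z.1 i).1 :=
    fun i => ((continuous_apply i).comp continuous_fst).fst
  have hc2 : ∀ i : ℕ, Continuous fun z : P => (z.1 i).2 :=
    fun i => ((continuous_apply i).comp continuous_fst).snd
  have hmeas : ∀ q, MeasurableSet (B q) := by
    intro q
    have hB' : B q = (⋂ i, {z : P | i < q.1 → 0 < (z.1 i).2}) ∩
        ⋂ n, {z : P | q.2 ≤ n →
          (∀ i < q.1, ‖(z.1 i).1 - myPS e coord n (z.1 i).1‖ < (z.1 i).2) → z.2 n = true} := by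
      ext z
      simp only [B, Set.mem_setOf_eq, Set.mem_inter_iff, Set.mem_iInter]
    rw [hB']
    refine MeasurableSet.inter (MeasurableSet.iInter fun i => ?_)
      (MeasurableSet.iInter fun n => ?_)
    · by_cases hi : i < q.1
      · have h : {z : P | i < q.1 → 0 < (z.1 i).2} = {z : P | 0 < (z.1 i).2} := by
          ext z; simp [hi]
        rw [h]
        exact (isOpen_lt continuous_const (hc2 i)).measurableSet
      · have h : {z : P | i < q.1 → 0 < (z.1 i).2} = Set.univ :=
          Set.eq_univ_of_forall fun z h => absurd h hi
        rw [h]; exact MeasurableSet.univ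
    · have hfn : MeasurableSet {z : P | z.2 n = true} := by
        have hm : Measurable fun z : P => z.2 n := (measurable_pi_apply n).comp measurable_snd
        exact hm (measurableSet_singleton true)
      by_cases hn : q.2 ≤ n
      · have heq : {z : P | q.2 ≤ n →
            (∀ i < q.1, ‖(z.1 i).1 - myPS e coord n (z.1 i).1‖ < (z.1 i).2) → z.2 n = true}
            = {z : P | ∀ i < q.1, ‖(z.1 i).1 - myPS e coord n (z.1 i).1‖ < (z.1 i).2}ᶜ
              ∪ {z : P | z.2 n = true} := by
          ext z
          simp [hn, imp_iff_not_or]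
        rw [heq]
        have hD : MeasurableSet
            {z : P | ∀ i < q.1, ‖(z.1 i).1 - myPS e coord n (z.1 i).1‖ < (z.1 i).2} := by
          have h2 : {z : P | ∀ i < q.1, ‖(z.1 i).1 - myPS e coord n (z.1 i).1‖ < (z.1 i).2}
              = ⋂ i, {z : P | i < q.1 → ‖(z.1 i).1 - myPS e coord n (z.1 i).1‖ < (z.1 i).2} := by
            ext z; simp [Set.mem_iInter]
          rw [h2]
          refine MeasurableSet.iInter fun i => ?_
          by_cases hi : i < q.1
          · have h : {z : P | i < q.1 → ‖(z.1 i).1 - myPS e coord n (z.1 i).1‖ < (z.1 i).2}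
                = {z : P | ‖(z.1 i).1 - myPS e coord n (z.1 i).1‖ < (z.1 i).2} := by
              ext z; simp [hi]
            rw [h]
            exact (isOpen_lt ((hc1 i).sub ((hcont n).comp (hc1 i))).norm (hc2 i)).measurableSet
          · have h : {z : P | i < q.1 → ‖(z.1 i).1 - myPS e coord n (z.1 i).1‖ < (z.1 i).2}
                = Set.univ := Set.eq_univ_of_forall fun z h => absurd h hi
            rw [h]; exact MeasurableSet.univ
        exact hD.compl.union hfn
      · have heq : {z : P | q.2 ≤ n →
            (∀ i < q.1, ‖(z.1 i).1 - myPS e coord n (z.1 i).1‖ < (z.1 i).2) → z.2 n = true}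
            = Set.univ := Set.eq_univ_of_forall fun z h => absurd h hn
        rw [heq]; exact MeasurableSet.univ
  have himg : toCantor (myF' e coord) = ⋃ q : ℕ × ℕ, Prod.snd '' B q := by
    ext f
    simp only [toCantor, Set.mem_setOf_eq, myF', Set.mem_iUnion, Set.mem_image]
    constructor
    · rintro ⟨p, k, m, hpos, hmem⟩
      exact ⟨(k, m), (p, f), ⟨hpos, hmem⟩, rfl⟩
    · rintro ⟨⟨k, m⟩, ⟨p, g⟩, ⟨hpos, hmem⟩, rfl⟩
      exact ⟨p, k, m, hpos, hmem⟩
  rw [IsAnalyticFamily, himg]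
  haveI : PolishSpace Bool := inferInstance
  haveI : PolishSpace P := inferInstanceAs (PolishSpace ((ℕ → X × ℝ) × (ℕ → Bool)))
  exact AnalyticSet.iUnion fun q => ((hmeas q).analyticSet).image_of_continuous continuous_snd

end Aux2

/-- If `(e n)` is an `F`-basis with continuous coordinate functionals, for an
arbitrary filter `F` on ℕ, then there is an analytic filter `F' ⊆ F` such that `(e n)` is an
`F'`-basis (with the same coordinate functionals). -/
theorem exists_analytic_subfilter_basis
    {𝕂 X : Type*} [RCLike 𝕂] [NormedAddCommGroup X] [NormedSpace 𝕂 X] [CompleteSpace X]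
    (F : Set (Set ℕ)) (hF : IsFilterOnNat F)
    (e : ℕ → X) (coord : X → ℕ → 𝕂) (hbasis : IsFBasis F e coord)
    (hcont : ∀ n : ℕ, Continuous fun x => coord x n) :
    ∃ F' : Set (Set ℕ), IsFilterOnNat F' ∧ IsAnalyticFamily F' ∧ F' ⊆ F ∧
      IsFBasis F' e coord := by
  classical
  -- continuity of partial sums
  have hPScont : ∀ n, Continuous (fun x => myPS e coord n x) := by
    intro n
    exact continuous_finset_sum _ fun i _ => (hcont i).smul continuous_const
  -- every member of F is nonempty
  have hA_ne : ∀ A ∈ F, A.Nonempty := by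
    intro A hA
    rcases Set.eq_empty_or_nonempty A with rfl | h
    · exfalso
      have hall : ∀ b : ℕ → 𝕂,
          FLim F (fun m => ∑ i ∈ Finset.range m, b i • e i) (0 : X) :=
        fun b ε hε => ⟨∅, hA, by simp⟩
      have h1 := (hbasis 0).2 _ (hall fun _ => (1 : 𝕂))
      have h0 := (hbasis 0).2 _ (hall fun _ => (0 : 𝕂))
      exact one_ne_zero (congrFun (h1.trans h0.symm) 0)
    · exact h
  -- the U-sets belong to F
  have hU : ∀ (x : X) (ε : ℝ), 0 < ε → {n | ‖x - myPS e coord n x‖ < ε} ∈ F := by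
    intro x ε hε
    obtain ⟨A, hA, h⟩ := (hbasis x).1 ε hε
    exact hF.2.1 A hA _ fun n hn => h n hn
  -- X is separable
  have hdense : Dense (Submodule.span 𝕂 (Set.range e) : Set X) := by
    rw [Metric.dense_iff]
    intro x r hr
    obtain ⟨A, hA, h⟩ := (hbasis x).1 r hr
    obtain ⟨n, hn⟩ := hA_ne A hA
    refine ⟨myPS e coord n x, ?_, ?_⟩
    · rw [Metric.mem_ball, dist_eq_norm, ← norm_sub_rev]
      exact h n hn
    · exact Submodule.sum_mem _ fun i _ =>
        Submodule.smul_mem _ _ (Submodule.subset_span ⟨i, rfl⟩)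
  haveI : TopologicalSpace.SeparableSpace X := by
    rw [← TopologicalSpace.isSeparable_univ_iff]
    have h1 : TopologicalSpace.IsSeparable (Submodule.span 𝕂 (Set.range e) : Set X) :=
      (Set.countable_range e).isSeparable.span
    have h2 := h1.closure
    rwa [hdense.closure_eq] at h2
  haveI : SecondCountableTopology X := UniformSpace.secondCountable_of_separable X
  borelize X
  refine ⟨myF' e coord, myF'_isFilter e coord, myF'_analytic hPScont,
    myF'_subset hF hU, ?_⟩
  intro x
  constructor
  · intro ε hε
    refine ⟨{n | ‖x - myPS e coord n x‖ < ε}, ?_, fun n hn => hn⟩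
    exact ⟨fun _ => (x, ε), 1, 0, fun i hi => hε, fun n _ hc => by
      simpa using hc 0 (by omega)⟩
  · intro b hb
    refine (hbasis x).2 b fun ε hε => ?_
    obtain ⟨A, hA, h⟩ := hb ε hε
    exact ⟨A, myF'_subset hF hU hA, h⟩
end

section
/- Let X be a Banach space with an 𝓕-basis (e_n)_{n=1}^∞ whose coordinate functionals (e_n*) are continuous. If (f_n)_{n=1}^∞ is a sequence in X such that Σ_{n=1}^∞ ‖f_n − e_n‖·‖e_n*‖ ≤ δ for some δ ∈ (0,1), then (f_n)_{n=1}^∞ is also an 𝓕-basis for X and the assignment e_n ↦ f_n (n ∈ ℕ) extends to a surjective bounded linear isomorphism of X onto itself. -/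
open Filter Topology MeasureTheory TopologicalSpace

lemma flim_map {𝕂 X Y : Type*} [RCLike 𝕂] [NormedAddCommGroup X] [NormedSpace 𝕂 X]
    [NormedAddCommGroup Y] [NormedSpace 𝕂 Y]
    (F : Set (Set ℕ)) (T : X →L[𝕂] Y) {u : ℕ → X} {x : X} (h : FLim F u x) :
    FLim F (fun n => T (u n)) (T x) := by
  intro ε hε
  obtain ⟨A, hA, hA'⟩ := h (ε / (‖T‖ + 1)) (by positivity)
  refine ⟨A, hA, fun n hn => ?_⟩
  have h1 : ‖T x - T (u n)‖ ≤ ‖T‖ * ‖x - u n‖ := by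
    rw [← map_sub]; exact T.le_opNorm _
  have h2 : ‖T‖ * ‖x - u n‖ < (‖T‖ + 1) * (ε / (‖T‖ + 1)) := by
    have := hA' n hn
    have hT : (0:ℝ) ≤ ‖T‖ := norm_nonneg _
    nlinarith [norm_nonneg (x - u n)]
  have h3 : (‖T‖ + 1) * (ε / (‖T‖ + 1)) = ε := by
    field_simp
  linarith

/-- small-perturbation principle. If `(e n)` is an `F`-basis of a Banach space
`X` with continuous coordinate functionals `c n : X →L[𝕂] 𝕂`, and `(f n)` satisfies
`∑ ‖f n - e n‖ ⬝ ‖c n‖ ≤ δ < 1`, then `(f n)` is an `F`-basis and `e n ↦ f n` extends to a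
surjective bounded linear isomorphism of `X` onto itself. -/
theorem small_perturbation_FBasis
    {𝕂 X : Type*} [RCLike 𝕂] [NormedAddCommGroup X] [NormedSpace 𝕂 X] [CompleteSpace X]
    (F : Set (Set ℕ)) (hF : IsFilterOnNat F)
    (e : ℕ → X) (c : ℕ → X →L[𝕂] 𝕂) (hbasis : IsFBasis F e fun x n => c n x)
    (f : ℕ → X) (δ : ℝ) (hδ0 : 0 < δ) (hδ1 : δ < 1)
    (hsum : Summable fun n => ‖f n - e n‖ * ‖c n‖)
    (hle : (∑' n, ‖f n - e n‖ * ‖c n‖) ≤ δ) :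
    (∃ coord' : X → ℕ → 𝕂, IsFBasis F f coord') ∧
      ∃ T : X ≃L[𝕂] X, ∀ n : ℕ, T (e n) = f n := by
  set g : ℕ → X := fun n => f n - e n with hg
  -- summability of the series defining S
  have hsx : ∀ x : X, Summable fun n => (c n x) • g n := by
    intro x
    apply Summable.of_norm
    apply Summable.of_nonneg_of_le (fun n => norm_nonneg _)
      (fun n => ?_) (hsum.mul_right ‖x‖)
    calc ‖(c n x) • g n‖ = ‖c n x‖ * ‖g n‖ := norm_smul _ _
      _ ≤ (‖c n‖ * ‖x‖) * ‖g n‖ := by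
          exact mul_le_mul_of_nonneg_right ((c n).le_opNorm x) (norm_nonneg _)
      _ = ‖g n‖ * ‖c n‖ * ‖x‖ := by ring
  have hsnx : ∀ x : X, Summable fun n => ‖(c n x) • g n‖ := by
    intro x
    apply Summable.of_nonneg_of_le (fun n => norm_nonneg _)
      (fun n => ?_) (hsum.mul_right ‖x‖)
    calc ‖(c n x) • g n‖ = ‖c n x‖ * ‖g n‖ := norm_smul _ _
      _ ≤ (‖c n‖ * ‖x‖) * ‖g n‖ := mul_le_mul_of_nonneg_right ((c n).le_opNorm x) (norm_nonneg _)
      _ = ‖g n‖ * ‖c n‖ * ‖x‖ := by ring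
  -- the perturbation operator S
  have hSbound : ∀ x : X, ‖∑' n, (c n x) • g n‖ ≤ δ * ‖x‖ := by
    intro x
    calc ‖∑' n, (c n x) • g n‖ ≤ ∑' n, ‖(c n x) • g n‖ := norm_tsum_le_tsum_norm (hsnx x)
      _ ≤ ∑' n, ‖g n‖ * ‖c n‖ * ‖x‖ := by
          refine Summable.tsum_le_tsum (fun n => ?_) (hsnx x) (hsum.mul_right ‖x‖)
          calc ‖(c n x) • g n‖ = ‖c n x‖ * ‖g n‖ := norm_smul _ _
            _ ≤ (‖c n‖ * ‖x‖) * ‖g n‖ :=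
                mul_le_mul_of_nonneg_right ((c n).le_opNorm x) (norm_nonneg _)
            _ = ‖g n‖ * ‖c n‖ * ‖x‖ := by ring
      _ = (∑' n, ‖g n‖ * ‖c n‖) * ‖x‖ := tsum_mul_right
      _ ≤ δ * ‖x‖ := mul_le_mul_of_nonneg_right hle (norm_nonneg _)
  let Slin : X →ₗ[𝕂] X :=
    { toFun := fun x => ∑' n, (c n x) • g n
      map_add' := by
        intro x y
        show (∑' n, (c n (x + y)) • g n) = (∑' n, (c n x) • g n) + ∑' n, (c n y) • g n
        rw [← Summable.tsum_add (hsx x) (hsx y)]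
        exact tsum_congr fun n => by rw [map_add, add_smul]
      map_smul' := by
        intro a x
        show (∑' n, (c n (a • x)) • g n) = a • ∑' n, (c n x) • g n
        rw [← tsum_const_smul'' a]
        exact tsum_congr fun n => by
          rw [ContinuousLinearMap.map_smul, smul_smul, smul_eq_mul] }
  let S : X →L[𝕂] X := Slin.mkContinuous δ hSbound
  have hSapp : ∀ x : X, S x = ∑' n, (c n x) • g n := fun x => rfl
  have hSnorm : ‖S‖ ≤ δ := Slin.mkContinuous_norm_le hδ0.le hSbound
  -- the invertible operator T = 1 + S
  have hunit : ‖-S‖ < 1 := by rw [norm_neg]; exact lt_of_le_of_lt hSnorm hδ1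
  let u : (X →L[𝕂] X)ˣ := Units.oneSub (-S) hunit
  let T : X ≃L[𝕂] X := ContinuousLinearEquiv.unitsEquiv 𝕂 X u
  have hTapp : ∀ x : X, T x = x + S x := by
    intro x
    show (((1 : X →L[𝕂] X) - (-S)) x) = x + S x
    simp [sub_neg_eq_add]
  -- coordinates of e n
  have hcoord : ∀ n i : ℕ, c i (e n) = if i = n then (1:𝕂) else 0 := by
    intro n i
    have hb : FLim F (fun m => ∑ i ∈ Finset.range m,
        (if i = n then (1:𝕂) else 0) • e i) (e n) := by
      intro ε hε
      refine ⟨{m | n < m}, hF.2.2 _ ?_, fun m hm => ?_⟩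
      · have : {m : ℕ | n < m}ᶜ = {m | m ≤ n} := by ext m; simp [not_lt]
        rw [this]
        exact (Set.finite_Iic n)
      · have : ∑ i ∈ Finset.range m, (if i = n then (1:𝕂) else 0) • e i = e n := by
          rw [Finset.sum_congr rfl (fun i _ => by rw [ite_smul, one_smul, zero_smul])]
          rw [Finset.sum_ite_eq' (Finset.range m) n e]
          simp [Finset.mem_range.mpr hm]
        show ‖e n - ∑ i ∈ Finset.range m, (if i = n then (1:𝕂) else 0) • e i‖ < ε
        rw [this]; simpa using hε
    have := (hbasis (e n)).2 _ hb
    exact (congrFun this i).symm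
  -- T sends e n to f n
  have hTe : ∀ n : ℕ, T (e n) = f n := by
    intro n
    rw [hTapp, hSapp]
    have : ∑' i, (c i (e n)) • g i = g n := by
      rw [tsum_eq_single n]
      · rw [hcoord n n]; simp
      · intro i hi
        rw [hcoord n i, if_neg hi, zero_smul]
    rw [this]
    show e n + (f n - e n) = f n
    abel
  refine ⟨⟨fun x n => c n (T.symm x), fun x => ⟨?_, ?_⟩⟩, T, hTe⟩
  · -- partial sums of f-expansion converge to x
    have h1 := (hbasis (T.symm x)).1
    have h2 := flim_map F (T : X →L[𝕂] X) h1
    have heq : (fun m => (T : X →L[𝕂] X) (∑ i ∈ Finset.range m, (c i (T.symm x)) • e i))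
        = fun m => ∑ i ∈ Finset.range m, (c i (T.symm x)) • f i := by
      funext m
      rw [map_sum]
      exact Finset.sum_congr rfl fun i _ => by rw [ContinuousLinearMap.map_smul]; simp [hTe i]
    rw [heq] at h2
    have : (T : X →L[𝕂] X) (T.symm x) = x := T.apply_symm_apply x
    rwa [this] at h2
  · -- uniqueness
    intro b hb
    have h2 := flim_map F (T.symm : X →L[𝕂] X) hb
    have heq : (fun m => (T.symm : X →L[𝕂] X) (∑ i ∈ Finset.range m, b i • f i))
        = fun m => ∑ i ∈ Finset.range m, b i • e i := by
      funext m
      rw [map_sum]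
      refine Finset.sum_congr rfl fun i _ => ?_
      rw [ContinuousLinearMap.map_smul]
      congr 1
      rw [← hTe i]
      exact T.symm_apply_apply (e i)
    rw [heq] at h2
    exact (hbasis (T.symm x)).2 b h2
end

section
/- Let 𝓕 be an analytic filter on ℕ and let X be a separable Banach space with an 𝓕-basis (e_n)_{n=1}^∞ with coordinate functionals (e_n*). Then for every n ∈ ℕ and every open set U ⊆ 𝕂, the preimage (e_n*)^{-1}(U) is an analytic subset of X. -/
open Filter Topology MeasureTheory TopologicalSpace

/-- Binary intersection of analytic sets. -/
lemma AnalyticSet.inter' {α : Type*} [TopologicalSpace α] [T2Space α] {s t : Set α}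
    (hs : AnalyticSet s) (ht : AnalyticSet t) : AnalyticSet (s ∩ t) := by
  have h : s ∩ t = ⋂ b : Bool, bif b then s else t := by
    ext x; simp [Bool.forall_bool, and_comm]
  rw [h]
  exact AnalyticSet.iInter (fun b => by cases b <;> simpa)

/-- `FLim` rephrased via Cantor-space witnesses with rational thresholds. -/
lemma flim_iff_cantor {X : Type*} [SeminormedAddCommGroup X] (F : Set (Set ℕ))
    (u : ℕ → X) (x : X) :
    FLim F u x ↔ ∀ k : ℕ, ∃ f : ℕ → Bool, f ∈ toCantor F ∧
      ∀ m, f m = true → ‖x - u m‖ ≤ 1 / (k + 1) := by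
  constructor
  · intro h k
    obtain ⟨A, hA, hAlt⟩ := h (1 / (k + 1)) (by positivity)
    classical
    refine ⟨fun m => decide (m ∈ A), ?_, fun m hm => ?_⟩
    · have : {n | decide (n ∈ A) = true} = A := by ext n; simp
      simpa [toCantor, this] using hA
    · exact (hAlt m (by simpa using hm)).le
  · intro h ε hε
    obtain ⟨k, hk⟩ := exists_nat_one_div_lt hε
    obtain ⟨f, hf, hb⟩ := h k
    refine ⟨{n | f n = true}, hf, fun m hm => lt_of_le_of_lt (hb m hm) hk⟩

/-- For an analytic filter `F` and an `F`-basis of a separable Banach space,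
the preimage of any open set under a coordinate functional is analytic. -/
theorem analytic_preimage_coord
    {𝕂 X : Type*} [RCLike 𝕂] [NormedAddCommGroup X] [NormedSpace 𝕂 X] [CompleteSpace X]
    [SeparableSpace X]
    (F : Set (Set ℕ)) (hF : IsFilterOnNat F) (hFa : IsAnalyticFamily F)
    (e : ℕ → X) (coord : X → ℕ → 𝕂) (hbasis : IsFBasis F e coord) :
    ∀ (n : ℕ) (U : Set 𝕂), IsOpen U →
      MeasureTheory.AnalyticSet ((fun x => coord x n) ⁻¹' U) := by
  intro n U hU
  set S : ℕ → (ℕ → 𝕂) → X := fun m b => ∑ i ∈ Finset.range m, b i • e i with hS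
  -- the set of "good" pairs (x, b)
  set T : Set (X × (ℕ → 𝕂)) :=
    {p | p.2 n ∈ U} ∩ ⋂ k : ℕ, Prod.fst ''
      ((Prod.snd ⁻¹' toCantor F) ∩
        {t : (X × (ℕ → 𝕂)) × (ℕ → Bool) | ∀ m, t.2 m = true →
          ‖t.1.1 - S m t.1.2‖ ≤ 1 / (k + 1)}) with hT
  have hTmem : ∀ p : X × (ℕ → 𝕂), p ∈ T ↔ p.2 n ∈ U ∧
      FLim F (fun m => ∑ i ∈ Finset.range m, p.2 i • e i) p.1 := by
    intro p
    rw [flim_iff_cantor]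
    simp only [hT, Set.mem_inter_iff, Set.mem_setOf_eq, Set.mem_iInter, Set.mem_image,
      Set.mem_preimage]
    refine and_congr Iff.rfl (forall_congr' fun k => ?_)
    constructor
    · rintro ⟨t, ⟨htF, htb⟩, rfl⟩
      exact ⟨t.2, htF, htb⟩
    · rintro ⟨f, hfF, hfb⟩
      exact ⟨(p, f), ⟨hfF, hfb⟩, rfl⟩
  have himg : (fun x => coord x n) ⁻¹' U = Prod.fst '' T := by
    ext x
    constructor
    · intro hx
      exact ⟨(x, coord x), (hTmem _).2 ⟨hx, (hbasis x).1⟩, rfl⟩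
    · rintro ⟨p, hp, rfl⟩
      obtain ⟨h1, h2⟩ := (hTmem p).1 hp
      have hc := (hbasis p.1).2 p.2 h2
      show coord p.1 n ∈ U
      rw [← hc]; exact h1
  rw [himg]
  refine AnalyticSet.image_of_continuous ?_ continuous_fst
  refine AnalyticSet.inter' ?_ ?_
  · borelize 𝕂
    exact hU.measurableSet.analyticSet.preimage ((continuous_apply n).comp continuous_snd)
  · refine AnalyticSet.iInter fun k => ?_
    refine AnalyticSet.image_of_continuous ?_ continuous_fst
    have : PolishSpace Bool := {}
    refine AnalyticSet.inter' (hFa.preimage continuous_snd) ?_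
    have hclosed : IsClosed {t : (X × (ℕ → 𝕂)) × (ℕ → Bool) | ∀ m, t.2 m = true →
        ‖t.1.1 - S m t.1.2‖ ≤ 1 / (k + 1)} := by
      have : {t : (X × (ℕ → 𝕂)) × (ℕ → Bool) | ∀ m, t.2 m = true →
          ‖t.1.1 - S m t.1.2‖ ≤ 1 / (k + 1)} =
          ⋂ m, ({t : (X × (ℕ → 𝕂)) × (ℕ → Bool) | t.2 m = true}ᶜ ∪
            {t | ‖t.1.1 - S m t.1.2‖ ≤ 1 / (k + 1)}) := by
        ext t
        simp only [Set.mem_setOf_eq, Set.mem_iInter, Set.mem_union, Set.mem_compl_iff]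
        exact forall_congr' fun m => by tauto
      rw [this]
      refine isClosed_iInter fun m => IsClosed.union ?_ ?_
      · have ho : IsOpen ((fun t : (X × (ℕ → 𝕂)) × (ℕ → Bool) => t.2 m) ⁻¹' {true}) :=
          (isOpen_discrete _).preimage ((continuous_apply m).comp continuous_snd)
        exact ho.isClosed_compl
      · have hcont : Continuous fun t : (X × (ℕ → 𝕂)) × (ℕ → Bool) =>
            ‖t.1.1 - S m t.1.2‖ := by
          refine Continuous.norm (Continuous.sub (continuous_fst.comp continuous_fst) ?_)
          refine continuous_finset_sum _ fun i _ => ?_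
          exact ((continuous_apply i).comp (continuous_snd.comp continuous_fst)).smul
            continuous_const
        exact isClosed_le hcont continuous_const
    exact hclosed.analyticSet
end

section
/- Let X be a separable Banach space, (e_n)_{n=1}^∞ a sequence in X, and (e_n*)_{n=1}^∞ a sequence of continuous linear functionals on X. Then the family 𝓐 := { A ⊆ ℕ : there exist x ∈ X and ε > 0 with A ⊇ { n ∈ ℕ : ‖Σ_{i=1}^n e_i*(x) e_i − x‖ ≤ ε } }, viewed as a subset of the Cantor space {0,1}^ℕ via characteristic functions, is an analytic set. -/
open Filter Topology MeasureTheory TopologicalSpace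

/-- For a separable Banach space `X`, a sequence `(e n)` in `X` and a sequence of
continuous linear functionals `(c n)`, the family
`𝓐 = {A ⊆ ℕ : ∃ x, ε > 0, A ⊇ {n : ‖∑_{i<n} c i x • e i - x‖ ≤ ε}}` is analytic. -/
theorem analytic_approx_family
    {𝕂 X : Type*} [RCLike 𝕂] [NormedAddCommGroup X] [NormedSpace 𝕂 X] [CompleteSpace X]
    [SeparableSpace X]
    (e : ℕ → X) (c : ℕ → X →L[𝕂] 𝕂) :
    IsAnalyticFamily {A : Set ℕ | ∃ (x : X) (ε : ℝ), 0 < ε ∧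
      {n : ℕ | ‖(∑ i ∈ Finset.range n, c i x • e i) - x‖ ≤ ε} ⊆ A} := by
  classical
  haveI : SecondCountableTopology X := UniformSpace.secondCountable_of_separable X
  borelize X
  set B : Set (X × ℝ × (ℕ → Bool)) :=
    {p | 0 < p.2.1 ∧ ∀ n, ‖(∑ i ∈ Finset.range n, c i p.1 • e i) - p.1‖ ≤ p.2.1 → p.2.2 n = true}
    with hBdef
  have h0 : MeasurableSet {p : X × ℝ × (ℕ → Bool) | 0 < p.2.1} :=
    measurableSet_lt measurable_const (measurable_fst.comp measurable_snd)
  have hf : MeasurableSet {p : X × ℝ × (ℕ → Bool) |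
      ∀ n, ‖(∑ i ∈ Finset.range n, c i p.1 • e i) - p.1‖ ≤ p.2.1 → p.2.2 n = true} := by
    rw [Set.setOf_forall]
    refine MeasurableSet.iInter fun n => ?_
    have h1 : MeasurableSet {p : X × ℝ × (ℕ → Bool) |
        ‖(∑ i ∈ Finset.range n, c i p.1 • e i) - p.1‖ ≤ p.2.1} := by
      apply measurableSet_le
      · exact (Continuous.measurable (by fun_prop))
      · exact measurable_fst.comp measurable_snd
    have h2 : MeasurableSet {p : X × ℝ × (ℕ → Bool) | p.2.2 n = true} := by
      have : Measurable fun p : X × ℝ × (ℕ → Bool) => p.2.2 n :=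
        (measurable_pi_apply n).comp (measurable_snd.comp measurable_snd)
      exact this (MeasurableSet.singleton true)
    have : {p : X × ℝ × (ℕ → Bool) |
        ‖(∑ i ∈ Finset.range n, c i p.1 • e i) - p.1‖ ≤ p.2.1 → p.2.2 n = true}
        = {p | ‖(∑ i ∈ Finset.range n, c i p.1 • e i) - p.1‖ ≤ p.2.1}ᶜ
          ∪ {p | p.2.2 n = true} := by
      ext p; simp [imp_iff_not_or]
    rw [this]
    exact h1.compl.union h2
  have hB : MeasurableSet B := by
    rw [hBdef, Set.setOf_and]
    exact h0.inter hf
  haveI : PolishSpace Bool := inferInstance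
  have hA : AnalyticSet B := hB.analyticSet
  have him := hA.image_of_continuous (f := fun p : X × ℝ × (ℕ → Bool) => p.2.2)
    (continuous_snd.comp continuous_snd)
  have : toCantor {A : Set ℕ | ∃ (x : X) (ε : ℝ), 0 < ε ∧
      {n : ℕ | ‖(∑ i ∈ Finset.range n, c i x • e i) - x‖ ≤ ε} ⊆ A}
      = (fun p : X × ℝ × (ℕ → Bool) => p.2.2) '' B := by
    ext f
    constructor
    · rintro ⟨x, ε, hε, hsub⟩
      exact ⟨⟨x, ε, f⟩, ⟨hε, fun n hn => hsub hn⟩, rfl⟩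
    · rintro ⟨⟨x, ε, g⟩, ⟨hε, h⟩, rfl⟩
      exact ⟨x, ε, hε, fun n hn => h n hn⟩
  rw [IsAnalyticFamily, this]
  exact him
end

section
/- Let X be a Banach space with an 𝓕-basis (e_n)_{n=1}^∞ whose coordinate functionals (e_n*) are continuous, and let (f_n)_{n=1}^∞ be a sequence in X with Σ_{n=1}^∞ ‖f_n − e_n‖·‖e_n*‖ ≤ δ for some δ ∈ (0,1). Then for every x ∈ X the series Σ_{i=1}^∞ e_i*(x)(f_i − e_i) converges absolutely in X, and the linear operator T : X → X defined by Tx = Σ_{i=1}^∞ e_i*(x)(f_i − e_i) is bounded with ‖Tx‖ ≤ δ‖x‖ for all x ∈ X; consequently the operator I_X + T is an invertible bounded operator on X mapping e_n to f_n for every n. -/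
open Filter Topology MeasureTheory TopologicalSpace

/-- Under the small-perturbation hypotheses, for every `x` the series
`∑ c i x • (f i - e i)` converges absolutely, the operator `T x = ∑' i, c i x • (f i - e i)`
is bounded with `‖T x‖ ≤ δ‖x‖`, and `I + T` is an invertible bounded operator sending
`e n` to `f n`. -/
theorem perturbation_operator
    {𝕂 X : Type*} [RCLike 𝕂] [NormedAddCommGroup X] [NormedSpace 𝕂 X] [CompleteSpace X]
    (F : Set (Set ℕ)) (hF : IsFilterOnNat F)
    (e : ℕ → X) (c : ℕ → X →L[𝕂] 𝕂) (hbasis : IsFBasis F e fun x n => c n x)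
    (f : ℕ → X) (δ : ℝ) (hδ0 : 0 < δ) (hδ1 : δ < 1)
    (hsum : Summable fun n => ‖f n - e n‖ * ‖c n‖)
    (hle : (∑' n, ‖f n - e n‖ * ‖c n‖) ≤ δ) :
    (∀ x : X, Summable fun i => ‖c i x • (f i - e i)‖) ∧
    ∃ T : X →L[𝕂] X, (∀ x : X, T x = ∑' i, c i x • (f i - e i)) ∧
      (∀ x : X, ‖T x‖ ≤ δ * ‖x‖) ∧
      ∃ S : X ≃L[𝕂] X, (∀ x : X, S x = x + T x) ∧ ∀ n : ℕ, S (e n) = f n := by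
  -- summability of norms
  have hsumx : ∀ x : X, Summable fun i => ‖c i x • (f i - e i)‖ := by
    intro x
    have hle' : ∀ i, ‖c i x • (f i - e i)‖ ≤ ‖x‖ * (‖f i - e i‖ * ‖c i‖) := by
      intro i
      rw [norm_smul]
      calc ‖c i x‖ * ‖f i - e i‖ ≤ (‖c i‖ * ‖x‖) * ‖f i - e i‖ := by
            gcongr; exact (c i).le_opNorm x
        _ = ‖x‖ * (‖f i - e i‖ * ‖c i‖) := by ring
    exact Summable.of_nonneg_of_le (fun i => norm_nonneg _) hle' (hsum.mul_left ‖x‖)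
  have hsumv : ∀ x : X, Summable fun i => c i x • (f i - e i) := fun x =>
    (hsumx x).of_norm
  -- the linear map
  have hbound : ∀ x : X, ‖∑' i, c i x • (f i - e i)‖ ≤ δ * ‖x‖ := by
    intro x
    calc ‖∑' i, c i x • (f i - e i)‖ ≤ ∑' i, ‖c i x • (f i - e i)‖ :=
          norm_tsum_le_tsum_norm (hsumx x)
      _ ≤ ∑' i, ‖x‖ * (‖f i - e i‖ * ‖c i‖) := by
          apply Summable.tsum_le_tsum _ (hsumx x) (hsum.mul_left ‖x‖)
          intro i
          rw [norm_smul]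
          calc ‖c i x‖ * ‖f i - e i‖ ≤ (‖c i‖ * ‖x‖) * ‖f i - e i‖ := by
                gcongr; exact (c i).le_opNorm x
            _ = ‖x‖ * (‖f i - e i‖ * ‖c i‖) := by ring
      _ = ‖x‖ * ∑' i, ‖f i - e i‖ * ‖c i‖ := tsum_mul_left
      _ ≤ ‖x‖ * δ := by gcongr
      _ = δ * ‖x‖ := mul_comm _ _
  let Tlin : X →ₗ[𝕂] X :=
    { toFun := fun x => ∑' i, c i x • (f i - e i)
      map_add' := by
        intro x y
        show (∑' i, c i (x + y) • (f i - e i)) =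
          (∑' i, c i x • (f i - e i)) + ∑' i, c i y • (f i - e i)
        rw [← Summable.tsum_add (hsumv x) (hsumv y)]
        congr 1; funext i
        simp [add_smul]
      map_smul' := by
        intro a x
        show (∑' i, c i (a • x) • (f i - e i)) = a • ∑' i, c i x • (f i - e i)
        rw [← tsum_const_smul'' a]
        congr 1; funext i
        simp [smul_smul] }
  let T : X →L[𝕂] X := Tlin.mkContinuous δ hbound
  have hT : ∀ x : X, T x = ∑' i, c i x • (f i - e i) := fun _ => rfl
  refine ⟨hsumx, T, hT, fun x => hbound x, ?_⟩
  -- invertibility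
  have hTnorm : ‖-T‖ < 1 := by
    rw [norm_neg]
    apply lt_of_le_of_lt _ hδ1
    apply ContinuousLinearMap.opNorm_le_bound _ hδ0.le
    exact hbound
  let u : (X →L[𝕂] X)ˣ := Units.oneSub (-T) hTnorm
  have hu : (u : X →L[𝕂] X) = 1 + T := by
    show 1 - (-T) = 1 + T
    rw [sub_neg_eq_add]
  let S : X ≃L[𝕂] X := ContinuousLinearEquiv.unitsEquiv 𝕂 X u
  have hS : ∀ x : X, S x = x + T x := by
    intro x
    show (u : X →L[𝕂] X) x = x + T x
    rw [hu]; simp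
  refine ⟨S, hS, ?_⟩
  -- coordinates of basis vectors
  have hcoord : ∀ n i : ℕ, c i (e n) = if i = n then 1 else 0 := by
    intro n i
    have huniq := (hbasis (e n)).2 (fun i => if i = n then 1 else 0) ?_
    · exact (congrFun huniq i).symm
    · intro ε hε
      refine ⟨{m | n < m}, hF.2.2 _ ?_, ?_⟩
      · apply Set.Finite.subset (Set.finite_Iic n)
        intro m hm
        simpa using Nat.le_of_not_lt hm
      · intro m hm
        have hm' : n < m := hm
        have : ∑ i ∈ Finset.range m, (if i = n then (1:𝕂) else 0) • e i = e n := by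
          simp only [ite_smul, one_smul, zero_smul]
          rw [Finset.sum_ite_eq' (Finset.range m) n e]
          simp [hm']
        simpa [this, hm'] using hε
  intro n
  have hTe : T (e n) = f n - e n := by
    rw [hT]
    have : (fun i => c i (e n) • (f i - e i)) = fun i => if i = n then f n - e n else 0 := by
      funext i
      rw [hcoord n i]
      split_ifs with h
      · subst h; simp
      · simp
    rw [this, tsum_ite_eq]
  rw [hS, hTe]
  abel
end

section
/- Let 𝓕 be a filter on ℕ, X a Banach space, and (e_n)_{n=1}^∞ an 𝓕-basis for X with coordinate functionals (e_n*) and initial basis projections P_m x = Σ_{i=1}^m e_i*(x) e_i. If the projections are uniformly bounded, i.e. sup_m ‖P_m‖ < ∞, then (e_n)_{n=1}^∞ is a Schauder basis for X, i.e. for every x ∈ X the partial sums P_m x converge to x in norm as m → ∞. -/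
open Filter Topology MeasureTheory TopologicalSpace

/-- Grunblum-type criterion. If the initial projections of an `F`-basis are
uniformly bounded, then the basis is a Schauder basis: the partial sums converge in norm. -/
theorem schauder_of_uniformly_bounded_projections
    {𝕂 X : Type*} [RCLike 𝕂] [NormedAddCommGroup X] [NormedSpace 𝕂 X] [CompleteSpace X]
    (F : Set (Set ℕ)) (hF : IsFilterOnNat F)
    (e : ℕ → X) (coord : X → ℕ → 𝕂) (hbasis : IsFBasis F e coord)
    (C : ℝ) (hC : ∀ (m : ℕ) (x : X), ‖∑ i ∈ Finset.range m, coord x i • e i‖ ≤ C * ‖x‖) :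
    ∀ x : X, Filter.Tendsto (fun m => ∑ i ∈ Finset.range m, coord x i • e i)
      Filter.atTop (nhds x) := by
  -- every member of F is nonempty
  have hne : ∀ A ∈ F, A.Nonempty := by
    intro A hA
    by_contra h
    rw [Set.not_nonempty_iff_eq_empty] at h
    subst h
    have hAll : ∀ B : Set ℕ, B ∈ F := fun B => hF.2.1 ∅ hA B (Set.empty_subset B)
    have hu : ∀ b : ℕ → 𝕂, b = coord 0 := fun b =>
      (hbasis 0).2 b (fun ε hε => ⟨∅, hAll ∅, by simp⟩)
    have h1 := congrFun (hu (fun i => coord (0 : X) i + 1)) 0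
    simp at h1
  intro x
  rw [Metric.tendsto_atTop]
  intro ε hε
  set Cp : ℝ := max C 0 with hCpdef
  have hCp0 : (0 : ℝ) ≤ Cp := le_max_right _ _
  set δ : ℝ := ε / (2 * (Cp + 1)) with hδdef
  have hδ : 0 < δ := by positivity
  obtain ⟨A, hA, hAx⟩ := (hbasis x).1 δ hδ
  obtain ⟨N, hN⟩ := hne A hA
  set y : X := x - ∑ i ∈ Finset.range N, coord x i • e i with hy
  have hyn : ‖y‖ < δ := hAx N hN
  -- key sum identity
  have key : ∀ n : ℕ, N ≤ n →
      ∑ i ∈ Finset.range n, (if i < N then (0 : 𝕂) else coord x i) • e i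
        = (∑ i ∈ Finset.range n, coord x i • e i)
          - ∑ i ∈ Finset.range N, coord x i • e i := by
    intro n hn
    have h1 : ∀ i ∈ Finset.range n, (if i < N then (0 : 𝕂) else coord x i) • e i
        = if ¬ i < N then coord x i • e i else 0 := by
      intro i _
      by_cases h : i < N <;> simp [h]
    rw [Finset.sum_congr rfl h1, ← Finset.sum_filter]
    have h2 : (Finset.range n).filter (fun i => ¬ i < N) = Finset.Ico N n := by
      ext i
      simp only [Finset.mem_filter, Finset.mem_range, Finset.mem_Ico, not_lt]
      omega
    rw [h2, Finset.sum_Ico_eq_sub _ hn]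
  -- identify the coordinates of y
  have hb' : (fun i => if i < N then (0 : 𝕂) else coord x i) = coord y := by
    apply (hbasis y).2
    intro ε' hε'
    obtain ⟨B, hB, hBx⟩ := (hbasis x).1 ε' hε'
    refine ⟨B ∩ {n | N ≤ n}, hF.1 B hB _ (hF.2.2 _ ?_), ?_⟩
    · have : {n : ℕ | N ≤ n}ᶜ = {n | n < N} := by ext n; simp [not_le]
      rw [this]
      exact (Set.finite_Iio N).subset (fun n hn => hn)
    · rintro n ⟨hn1, hn2⟩
      simp only
      rw [key n hn2]
      have : y - ((∑ i ∈ Finset.range n, coord x i • e i)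
          - ∑ i ∈ Finset.range N, coord x i • e i)
          = x - ∑ i ∈ Finset.range n, coord x i • e i := by
        rw [hy]; abel
      rw [this]
      exact hBx n hn1
  refine ⟨N, fun m hm => ?_⟩
  have hPm := hC m y
  rw [← hb', key m hm] at hPm
  have hdist : dist (∑ i ∈ Finset.range m, coord x i • e i) x
      ≤ ‖(∑ i ∈ Finset.range m, coord x i • e i)
          - ∑ i ∈ Finset.range N, coord x i • e i‖ + ‖y‖ := by
    rw [dist_eq_norm]
    have : (∑ i ∈ Finset.range m, coord x i • e i) - x
        = ((∑ i ∈ Finset.range m, coord x i • e i)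
            - ∑ i ∈ Finset.range N, coord x i • e i) + (-y) := by
      rw [hy]; abel
    rw [this]
    calc ‖_ + (-y)‖ ≤ _ + ‖(-y)‖ := norm_add_le _ _
      _ = _ + ‖y‖ := by rw [norm_neg]
  have hCy : C * ‖y‖ ≤ Cp * ‖y‖ := mul_le_mul_of_nonneg_right (le_max_left _ _) (norm_nonneg _)
  have hCpy : Cp * ‖y‖ ≤ Cp * δ := mul_le_mul_of_nonneg_left hyn.le hCp0
  calc dist (∑ i ∈ Finset.range m, coord x i • e i) x
      ≤ ‖(∑ i ∈ Finset.range m, coord x i • e i)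
          - ∑ i ∈ Finset.range N, coord x i • e i‖ + ‖y‖ := hdist
    _ ≤ Cp * δ + δ := by linarith
    _ = (Cp + 1) * δ := by ring
    _ = ε / 2 := by
        rw [hδdef]
        field_simp
    _ < ε := by linarith
end
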